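/- arXiv:1507.00532 — 8 statements merged into one kernel-verified Lean document; each statement's English description precedes it below -/
import Mathlib

section
/- The number of subgroups of exponent p^i in the group Z_{p^{λ1}} × Z_{p^{λ2}}, where λ1 ≥ λ2 ≥ 1 and λ2 < i ≤ λ1, equals (p^{λ2+1} − 1)/(p − 1). -/
open AddSubgroup

private lemma mem_zmultiples_natCast_iff {n d : ℕ} (hd : d ∣ n) (hn : n ≠ 0) (y : ZMod n) :
    y ∈ zmultiples ((d : ℕ) : ZMod n) ↔ d ∣ y.val := by
  haveI : NeZero n := ⟨hn⟩
  haveI : NeZero d := ⟨fun h => hn (Nat.eq_zero_of_zero_dvd (h ▸ hd))⟩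
  constructor
  · rintro ⟨k, rfl⟩
    have h0 : (ZMod.castHom hd (ZMod d)) (k • ((d : ℕ) : ZMod n)) = 0 := by
      rw [map_zsmul, map_natCast, ZMod.natCast_self, smul_zero]
    rwa [ZMod.castHom_apply, ← ZMod.natCast_val, ZMod.natCast_eq_zero_iff] at h0
  · rintro ⟨c, hc⟩
    refine ⟨(c : ℤ), ?_⟩
    have h : ((d * c : ℕ) : ZMod n) = y := by
      rw [← hc, ZMod.natCast_val, ZMod.cast_id]
    show (c : ℤ) • ((d : ℕ) : ZMod n) = y
    rw [← h, zsmul_eq_mul]; push_cast; ring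

private lemma nsmul_natCard_zmod (n : ℕ) (y : ZMod n) : n • y = 0 := by
  have : ((n : ℕ) : ZMod n) = 0 := ZMod.natCast_self n
  calc n • y = ((n : ℕ) : ZMod n) * y := by rw [nsmul_eq_mul]
  _ = 0 := by rw [this, zero_mul]

private lemma nsmul_eq_zero_iff_dvd {n : ℕ} (hn : n ≠ 0) (m : ℕ) (y : ZMod n) :
    m • y = 0 ↔ n ∣ m * y.val := by
  haveI : NeZero n := ⟨hn⟩
  have : m • y = ((m * y.val : ℕ) : ZMod n) := by
    rw [nsmul_eq_mul, Nat.cast_mul, ZMod.natCast_val, ZMod.cast_id]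
  rw [this, ZMod.natCast_eq_zero_iff]

private lemma addOrderOf_natCast_pow {p : ℕ} (hp : p.Prime) {m k : ℕ} (hk : k ≤ m) :
    addOrderOf ((p ^ k : ℕ) : ZMod (p ^ m)) = p ^ (m - k) := by
  rw [ZMod.addOrderOf_coe _ (pow_ne_zero m hp.pos.ne'),
    Nat.gcd_eq_right (pow_dvd_pow p hk), Nat.pow_div hk hp.pos]

private lemma nsmul_pow_eq_zero_iff {p : ℕ} (hp : p.Prime) {m k : ℕ} (hk : k ≤ m)
    (y : ZMod (p ^ m)) :
    (p ^ (m - k) : ℕ) • y = 0 ↔ y ∈ zmultiples ((p ^ k : ℕ) : ZMod (p ^ m)) := by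
  rw [nsmul_eq_zero_iff_dvd (pow_ne_zero m hp.pos.ne'),
      mem_zmultiples_natCast_iff (pow_dvd_pow p hk) (pow_ne_zero m hp.pos.ne')]
  have key := mul_dvd_mul_iff_left (a := p ^ (m - k)) (b := p ^ k) (c := y.val)
    (pow_ne_zero (m - k) hp.pos.ne')
  rw [← pow_add, Nat.sub_add_cancel hk] at key
  exact key

private lemma addSubgroup_zmod_eq {p : ℕ} (hp : p.Prime) (b : ℕ)
    (Q : AddSubgroup (ZMod (p ^ b))) :
    ∃ s ≤ b, Q = zmultiples ((p ^ s : ℕ) : ZMod (p ^ b)) := by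
  haveI : NeZero (p ^ b) := ⟨pow_ne_zero b hp.pos.ne'⟩
  have hdvd : Nat.card Q ∣ p ^ b := by
    simpa [Nat.card_zmod] using AddSubgroup.card_addSubgroup_dvd_card Q
  obtain ⟨j, hj, hQcard⟩ := (Nat.dvd_prime_pow hp).mp hdvd
  refine ⟨b - j, Nat.sub_le b j, ?_⟩
  have hle : Q ≤ zmultiples ((p ^ (b - j) : ℕ) : ZMod (p ^ b)) := by
    intro y hy
    have h1 : Nat.card Q • (⟨y, hy⟩ : Q) = 0 := card_nsmul_eq_zero'
    have h2 : (p ^ (b - (b - j)) : ℕ) • y = 0 := by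
      rw [hQcard] at h1
      rw [Nat.sub_sub_self hj]
      simpa using congrArg Subtype.val h1
    exact (nsmul_pow_eq_zero_iff hp (Nat.sub_le b j) y).mp h2
  refine AddSubgroup.eq_of_le_of_card_ge hle ?_
  rw [Nat.card_zmultiples, addOrderOf_natCast_pow hp (Nat.sub_le b j),
    Nat.sub_sub_self hj, hQcard]

section main
variable {p a b i : ℕ}

private def Fsub (p a b i : ℕ) (s : ℕ) (t : ZMod (p ^ s)) :
    AddSubgroup (ZMod (p ^ a) × ZMod (p ^ b)) :=
  AddSubgroup.closure {(((p ^ (a - i) : ℕ) : ZMod (p ^ a)), ((t.val : ℕ) : ZMod (p ^ b))),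
    (0, ((p ^ s : ℕ) : ZMod (p ^ b)))}

private lemma mem_Fsub_iff {s : ℕ} {t : ZMod (p ^ s)} {z : ZMod (p ^ a) × ZMod (p ^ b)} :
    z ∈ Fsub p a b i s t ↔ ∃ m n : ℤ,
      m • (((p ^ (a - i) : ℕ) : ZMod (p ^ a)), ((t.val : ℕ) : ZMod (p ^ b))) +
      n • ((0 : ZMod (p ^ a)), ((p ^ s : ℕ) : ZMod (p ^ b))) = z :=
  AddSubgroup.mem_closure_pair

private lemma smul_B (hbi : b ≤ i) (y : ZMod (p ^ b)) : (p ^ i : ℕ) • y = 0 := by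
  have h : (p ^ i : ℕ) = p ^ (i - b) * p ^ b := by rw [← pow_add, Nat.sub_add_cancel hbi]
  rw [h, ← smul_smul, nsmul_natCard_zmod, smul_zero]

private lemma zsmul_B (hbi : b ≤ i) {m : ℤ} (hm : ((p ^ i : ℕ) : ℤ) ∣ m) (y : ZMod (p ^ b)) :
    m • y = 0 :=
  addOrderOf_dvd_iff_zsmul_eq_zero.mp
    (dvd_trans (Int.natCast_dvd_natCast.mpr
      (addOrderOf_dvd_of_nsmul_eq_zero (smul_B hbi y))) hm)

private lemma addOrderOf_g (hp : p.Prime) (hi2 : i ≤ a) :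
    addOrderOf ((p ^ (a - i) : ℕ) : ZMod (p ^ a)) = p ^ i := by
  rw [addOrderOf_natCast_pow hp (Nat.sub_le a i), Nat.sub_sub_self hi2]

private lemma zsmul_g_eq_zero_iff (hp : p.Prime) (hi2 : i ≤ a) {m : ℤ} :
    m • ((p ^ (a - i) : ℕ) : ZMod (p ^ a)) = 0 ↔ ((p ^ i : ℕ) : ℤ) ∣ m := by
  rw [← addOrderOf_dvd_iff_zsmul_eq_zero, addOrderOf_g hp hi2]

private lemma exp_Fsub (hp : p.Prime) (hi1 : b < i) (hi2 : i ≤ a)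
    (s : ℕ) (t : ZMod (p ^ s)) :
    AddMonoid.exponent (Fsub p a b i s t) = p ^ i := by
  set g : ZMod (p ^ a) := ((p ^ (a - i) : ℕ) : ZMod (p ^ a)) with hg
  set t₀ : ZMod (p ^ b) := ((t.val : ℕ) : ZMod (p ^ b)) with ht0
  set ps : ZMod (p ^ b) := ((p ^ s : ℕ) : ZMod (p ^ b)) with hps
  have hmemg : (g, t₀) ∈ Fsub p a b i s t :=
    AddSubgroup.subset_closure (Set.mem_insert _ _)
  apply Nat.dvd_antisymm
  · rw [AddMonoid.exponent_dvd_iff_forall_nsmul_eq_zero]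
    rintro ⟨z, hz⟩
    refine Subtype.ext ?_
    push_cast
    obtain ⟨m, n, rfl⟩ := mem_Fsub_iff.mp hz
    have h1 : (p ^ i : ℕ) • (g, t₀) = (0 : ZMod (p ^ a) × ZMod (p ^ b)) := by
      rw [Prod.smul_mk, Prod.mk_eq_zero]
      exact ⟨by rw [← addOrderOf_g hp hi2]; exact addOrderOf_nsmul_eq_zero g,
        smul_B hi1.le t₀⟩
    have h2 : (p ^ i : ℕ) • ((0 : ZMod (p ^ a)), ps) = 0 := by
      rw [Prod.smul_mk, Prod.mk_eq_zero]
      exact ⟨smul_zero _, smul_B hi1.le ps⟩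
    rw [smul_add, smul_comm, h1, smul_zero, smul_comm, h2, smul_zero, add_zero]
  · have h4 : (p ^ i : ℕ) ∣ addOrderOf (g, t₀) := by
      rw [← addOrderOf_g hp hi2]
      apply addOrderOf_dvd_of_nsmul_eq_zero
      have h := addOrderOf_nsmul_eq_zero (g, t₀)
      rw [Prod.smul_mk, Prod.mk_eq_zero] at h
      exact h.1
    refine h4.trans ?_
    have h3 := addOrderOf_injective (Fsub p a b i s t).subtype Subtype.coe_injective
      ⟨(g, t₀), hmemg⟩
    rw [show addOrderOf (g, t₀) = addOrderOf ((⟨(g, t₀), hmemg⟩ : Fsub p a b i s t)) from by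
      rw [← h3]; rfl]
    exact AddMonoid.addOrder_dvd_exponent _

private lemma snd_fiber (hp : p.Prime) (hi1 : b < i) (hi2 : i ≤ a) (s : ℕ) (t : ZMod (p ^ s))
    (y : ZMod (p ^ b)) :
    ((0 : ZMod (p ^ a)), y) ∈ Fsub p a b i s t ↔
      y ∈ zmultiples ((p ^ s : ℕ) : ZMod (p ^ b)) := by
  constructor
  · rw [mem_Fsub_iff]
    rintro ⟨m, n, hmn⟩
    rw [Prod.smul_mk, Prod.smul_mk, Prod.mk_add_mk, Prod.mk.injEq] at hmn
    obtain ⟨h1, h2⟩ := hmn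
    rw [smul_zero, add_zero] at h1
    have hdvd : ((p ^ i : ℕ) : ℤ) ∣ m := (zsmul_g_eq_zero_iff hp hi2).mp h1
    rw [zsmul_B hi1.le hdvd, zero_add] at h2
    exact ⟨n, h2⟩
  · rintro ⟨n, hn⟩
    rw [mem_Fsub_iff]
    refine ⟨0, n, ?_⟩
    simp only [zero_smul, zero_add, Prod.smul_mk, smul_zero, Prod.mk.injEq]
    exact ⟨trivial, hn⟩

private lemma Fsub_inj1 (hp : p.Prime) (hi1 : b < i) (hi2 : i ≤ a)
    {s s' : ℕ} (hs : s ≤ b) (hs' : s' ≤ b) (t : ZMod (p ^ s)) (t' : ZMod (p ^ s'))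
    (h : Fsub p a b i s t = Fsub p a b i s' t') : s = s' := by
  have hz : zmultiples ((p ^ s : ℕ) : ZMod (p ^ b)) =
      zmultiples ((p ^ s' : ℕ) : ZMod (p ^ b)) := by
    ext y
    rw [← snd_fiber hp hi1 hi2 s t y, ← snd_fiber hp hi1 hi2 s' t' y, h]
  have hcard := congrArg (fun Q : AddSubgroup (ZMod (p ^ b)) => Nat.card Q) hz
  simp only [Nat.card_zmultiples, addOrderOf_natCast_pow hp hs,
    addOrderOf_natCast_pow hp hs'] at hcard
  have := Nat.pow_right_injective hp.two_le hcard
  omega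

private lemma Fsub_inj2 (hp : p.Prime) (hi1 : b < i) (hi2 : i ≤ a)
    {s : ℕ} (hs : s ≤ b) (t t' : ZMod (p ^ s))
    (h : Fsub p a b i s t = Fsub p a b i s t') : t = t' := by
  haveI : NeZero (p ^ s) := ⟨pow_ne_zero s hp.pos.ne'⟩
  have hmem : (((p ^ (a - i) : ℕ) : ZMod (p ^ a)), ((t.val : ℕ) : ZMod (p ^ b))) ∈
      Fsub p a b i s t' := by
    rw [← h]; exact AddSubgroup.subset_closure (Set.mem_insert _ _)
  obtain ⟨m, n, hmn⟩ := mem_Fsub_iff.mp hmem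
  rw [Prod.smul_mk, Prod.smul_mk, Prod.mk_add_mk, Prod.mk.injEq] at hmn
  obtain ⟨h1, h2⟩ := hmn
  rw [smul_zero, add_zero] at h1
  have hm0 : (m - 1) • ((p ^ (a - i) : ℕ) : ZMod (p ^ a)) = 0 := by
    rw [sub_smul, one_smul, h1, sub_self]
  have hm1 : ((p ^ i : ℕ) : ℤ) ∣ (m - 1) := (zsmul_g_eq_zero_iff hp hi2).mp hm0
  have ht' : m • ((t'.val : ℕ) : ZMod (p ^ b)) = ((t'.val : ℕ) : ZMod (p ^ b)) := by
    conv_lhs => rw [show m = 1 + (m - 1) by ring]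
    rw [add_smul, one_smul, zsmul_B hi1.le hm1, add_zero]
  rw [ht'] at h2
  have hφ := congrArg (ZMod.castHom (pow_dvd_pow p hs) (ZMod (p ^ s))) h2
  simp only [map_add, map_zsmul, map_natCast] at hφ
  rw [ZMod.natCast_val, ZMod.natCast_val, ZMod.cast_id, ZMod.cast_id] at hφ
  rw [show ((p ^ s : ℕ) : ZMod (p ^ s)) = 0 from ZMod.natCast_self _, smul_zero, add_zero] at hφ
  exact hφ.symm

private lemma Fsub_surj (hp : p.Prime) (hi1 : b < i) (hi2 : i ≤ a)
    (H : AddSubgroup (ZMod (p ^ a) × ZMod (p ^ b)))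
    (hH : AddMonoid.exponent H = p ^ i) :
    ∃ s, s ≤ b ∧ ∃ t : ZMod (p ^ s), H = Fsub p a b i s t := by
  haveI : NeZero (p ^ a) := ⟨pow_ne_zero a hp.pos.ne'⟩
  haveI : NeZero (p ^ b) := ⟨pow_ne_zero b hp.pos.ne'⟩
  -- every element is killed by p ^ i
  have hkill : ∀ z ∈ H, (p ^ i : ℕ) • z = 0 := by
    intro z hz
    have h0 := AddMonoid.exponent_dvd_iff_forall_nsmul_eq_zero.mp dvd_rfl
      (⟨z, hz⟩ : H)
    rw [hH] at h0
    exact congrArg Subtype.val h0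
  -- some element is not killed by p ^ (i - 1)
  have hex : ∃ z ∈ H, ¬ (p ^ (i - 1) : ℕ) • z = 0 := by
    by_contra hc
    push_neg at hc
    have hdvd : AddMonoid.exponent H ∣ p ^ (i - 1) := by
      rw [AddMonoid.exponent_dvd_iff_forall_nsmul_eq_zero]
      rintro ⟨z, hz⟩
      exact Subtype.ext (hc z hz)
    rw [hH] at hdvd
    have := (Nat.pow_dvd_pow_iff_le_right hp.one_lt).mp hdvd
    omega
  obtain ⟨⟨x, y⟩, hzH, hz1⟩ := hex
  have hx_i : (p ^ i : ℕ) • x = 0 := by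
    have := hkill _ hzH
    rw [Prod.smul_mk, Prod.mk_eq_zero] at this
    exact this.1
  have hy_i1 : (p ^ (i - 1) : ℕ) • y = 0 := smul_B (by omega) y
  have hx1 : ¬ (p ^ (i - 1) : ℕ) • x = 0 := by
    intro hc
    exact hz1 (by rw [Prod.smul_mk, Prod.mk_eq_zero]; exact ⟨hc, hy_i1⟩)
  -- x is a multiple of g
  have hxg : x ∈ zmultiples ((p ^ (a - i) : ℕ) : ZMod (p ^ a)) := by
    refine (nsmul_pow_eq_zero_iff hp (Nat.sub_le a i) x).mp ?_
    rw [Nat.sub_sub_self hi2]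
    exact hx_i
  rw [AddSubgroup.mem_zmultiples_iff] at hxg
  obtain ⟨c, hc⟩ := hxg
  -- p does not divide c
  have hpc : ¬ (p : ℤ) ∣ c := by
    rintro ⟨e, rfl⟩
    apply hx1
    rw [← natCast_zsmul, ← hc, smul_smul]
    apply (zsmul_g_eq_zero_iff hp hi2).mpr
    have hpow : ((p ^ i : ℕ) : ℤ) = (p : ℤ) ^ (i - 1) * p := by
      push_cast
      rw [← pow_succ, Nat.sub_add_cancel (by omega)]
    exact ⟨e, by rw [hpow]; push_cast; ring⟩
  -- invert c modulo p ^ a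
  have hp' : Prime (p : ℤ) := Nat.prime_iff_prime_int.mp hp
  have hcop : IsCoprime ((p : ℤ) ^ a) c := (hp'.coprime_iff_not_dvd.mpr hpc).pow_left
  obtain ⟨u, v, huv⟩ := hcop
  have hpa0 : (u * (p : ℤ) ^ a) • ((p ^ (a - i) : ℕ) : ZMod (p ^ a)) = 0 := by
    apply (zsmul_g_eq_zero_iff hp hi2).mpr
    refine Dvd.dvd.mul_left ?_ u
    have : ((p ^ i : ℕ) : ℤ) ∣ ((p ^ a : ℕ) : ℤ) :=
      Int.natCast_dvd_natCast.mpr (pow_dvd_pow p hi2)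
    simpa using this
  have hgc : v • x = ((p ^ (a - i) : ℕ) : ZMod (p ^ a)) := by
    rw [← hc, smul_smul]
    have hvc : v * c = 1 - u * (p : ℤ) ^ a := by linarith [huv]
    rw [hvc, sub_smul, one_smul, hpa0, sub_zero]
  have hgH : (((p ^ (a - i) : ℕ) : ZMod (p ^ a)), v • y) ∈ H := by
    have hm := H.zsmul_mem hzH v
    rw [Prod.smul_mk, hgc] at hm
    exact hm
  -- the intersection with the second factor
  obtain ⟨s, hs, hQ⟩ := addSubgroup_zmod_eq hp b
    (H.comap (AddMonoidHom.inr (ZMod (p ^ a)) (ZMod (p ^ b))))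
  have hQmem : ∀ w : ZMod (p ^ b), ((0 : ZMod (p ^ a)), w) ∈ H ↔
      w ∈ zmultiples ((p ^ s : ℕ) : ZMod (p ^ b)) := by
    intro w
    rw [← hQ, AddSubgroup.mem_comap, AddMonoidHom.inr_apply]
  haveI : NeZero (p ^ s) := ⟨pow_ne_zero s hp.pos.ne'⟩
  set y' : ZMod (p ^ b) := v • y with hy'def
  refine ⟨s, hs, ((y'.val : ℕ) : ZMod (p ^ s)), ?_⟩
  set t : ZMod (p ^ s) := ((y'.val : ℕ) : ZMod (p ^ s)) with htdef
  -- t₀ and y' differ by an element of zmultiples (p ^ s)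
  have hy'eq : y' = ((t.val : ℕ) : ZMod (p ^ b)) +
      (y'.val / p ^ s : ℕ) • ((p ^ s : ℕ) : ZMod (p ^ b)) := by
    have htval : t.val = y'.val % p ^ s := by rw [htdef, ZMod.val_natCast]
    have hsplit : y'.val = p ^ s * (y'.val / p ^ s) + y'.val % p ^ s :=
      (Nat.div_add_mod _ _).symm
    conv_lhs => rw [show y' = ((y'.val : ℕ) : ZMod (p ^ b)) from by
      rw [ZMod.natCast_val, ZMod.cast_id], hsplit]
    rw [htval]
    push_cast
    rw [nsmul_eq_mul]
    ring
  have hgen1 : (((p ^ (a - i) : ℕ) : ZMod (p ^ a)), ((t.val : ℕ) : ZMod (p ^ b))) ∈ H := by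
    have hdiff : ((0 : ZMod (p ^ a)), ((t.val : ℕ) : ZMod (p ^ b)) - y') ∈ H := by
      rw [hQmem, AddSubgroup.mem_zmultiples_iff]
      refine ⟨-((y'.val / p ^ s : ℕ) : ℤ), ?_⟩
      conv_rhs => rw [hy'eq]
      rw [neg_smul, natCast_zsmul]
      abel
    have hadd := H.add_mem hgH hdiff
    have h2 : y' + (((t.val : ℕ) : ZMod (p ^ b)) - y') = ((t.val : ℕ) : ZMod (p ^ b)) := by
      abel
    rw [Prod.mk_add_mk, add_zero, h2] at hadd
    exact hadd
  have hgen2 : ((0 : ZMod (p ^ a)), ((p ^ s : ℕ) : ZMod (p ^ b))) ∈ H := by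
    rw [hQmem]
    exact AddSubgroup.mem_zmultiples _
  -- conclude by antisymmetry
  apply le_antisymm
  · -- H ≤ Fsub
    rintro ⟨x₁, y₁⟩ hz
    have hx₁ : (p ^ i : ℕ) • x₁ = 0 := by
      have := hkill _ hz
      rw [Prod.smul_mk, Prod.mk_eq_zero] at this
      exact this.1
    have hx₁g : x₁ ∈ zmultiples ((p ^ (a - i) : ℕ) : ZMod (p ^ a)) := by
      refine (nsmul_pow_eq_zero_iff hp (Nat.sub_le a i) x₁).mp ?_
      rw [Nat.sub_sub_self hi2]
      exact hx₁
    rw [AddSubgroup.mem_zmultiples_iff] at hx₁g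
    obtain ⟨k, hk⟩ := hx₁g
    have hsub : ((0 : ZMod (p ^ a)), y₁ - k • ((t.val : ℕ) : ZMod (p ^ b))) ∈ H := by
      have hm := H.sub_mem hz (H.zsmul_mem hgen1 k)
      rw [Prod.smul_mk, Prod.mk_sub_mk] at hm
      rw [show x₁ - k • ((p ^ (a - i) : ℕ) : ZMod (p ^ a)) = 0 from by rw [hk, sub_self]] at hm
      exact hm
    rw [hQmem] at hsub
    obtain ⟨n, hn⟩ := hsub
    refine mem_Fsub_iff.mpr ⟨k, n, ?_⟩
    rw [Prod.smul_mk, Prod.smul_mk, Prod.mk_add_mk, smul_zero, add_zero, Prod.mk.injEq]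
    constructor
    · exact hk
    · rw [show n • ((p ^ s : ℕ) : ZMod (p ^ b)) =
        y₁ - k • ((t.val : ℕ) : ZMod (p ^ b)) from hn]
      abel
  · -- Fsub ≤ H
    rw [Fsub, AddSubgroup.closure_le]
    rintro z hz
    simp only [Set.mem_insert_iff, Set.mem_singleton_iff] at hz
    rcases hz with rfl | rfl
    · exact hgen1
    · exact hgen2

end main

theorem stmt_1 (p : ℕ) (hp : p.Prime) (lam1 lam2 i : ℕ)
    (h21 : lam2 ≤ lam1) (h2 : 1 ≤ lam2) (hi1 : lam2 < i) (hi2 : i ≤ lam1) :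
    Nat.card {H : AddSubgroup (ZMod (p ^ lam1) × ZMod (p ^ lam2)) //
        AddMonoid.exponent H = p ^ i} =
      (p ^ (lam2 + 1) - 1) / (p - 1) := by
  haveI : ∀ s : Fin (lam2 + 1), NeZero (p ^ (s : ℕ)) :=
    fun s => ⟨pow_ne_zero _ hp.pos.ne'⟩
  have key : Nat.card {H : AddSubgroup (ZMod (p ^ lam1) × ZMod (p ^ lam2)) //
      AddMonoid.exponent H = p ^ i} =
      Nat.card (Σ s : Fin (lam2 + 1), ZMod (p ^ (s : ℕ))) := by
    refine (Nat.card_congr (Equiv.ofBijective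
      (fun st : Σ s : Fin (lam2 + 1), ZMod (p ^ (s : ℕ)) =>
        (⟨Fsub p lam1 lam2 i (st.1 : ℕ) st.2, exp_Fsub hp hi1 hi2 _ _⟩ :
          {H : AddSubgroup (ZMod (p ^ lam1) × ZMod (p ^ lam2)) //
            AddMonoid.exponent H = p ^ i})) ⟨?_, ?_⟩)).symm
    · rintro ⟨s, t⟩ ⟨s', t'⟩ h
      rw [Subtype.mk.injEq] at h
      have hss : (s : ℕ) = (s' : ℕ) :=
        Fsub_inj1 hp hi1 hi2 (Fin.is_le s) (Fin.is_le s') t t' h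
      obtain rfl : s = s' := Fin.ext hss
      obtain rfl : t = t' := Fsub_inj2 hp hi1 hi2 (Fin.is_le s) t t' h
      rfl
    · rintro ⟨H, hH⟩
      obtain ⟨s, hs, t, rfl⟩ := Fsub_surj hp hi1 hi2 H hH
      exact ⟨⟨⟨s, by omega⟩, t⟩, rfl⟩
  rw [key, Nat.card_eq_fintype_card, Fintype.card_sigma]
  simp only [ZMod.card]
  rw [Fin.sum_univ_eq_sum_range (fun s => p ^ s) (lam2 + 1)]
  exact Nat.geomSum_eq hp.two_le _
end

section
/- The number of subgroups of exponent p^i in Z_{p^i} × Z_{p^i} equals 1 + (p+1)(p^i − 1)/(p − 1) = (p^{i+1} + p^i − 2)/(p − 1), for every i ≥ 1. -/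
/-!
An element of `ZMod (p ^ i) × ZMod (p ^ i)` has order `p ^ i` exactly when one of its coordinates
is a unit, so a subgroup has exponent `p ^ i` iff one of its two projections is onto.

For any `n ≠ 0`, a subgroup of `ZMod n × ZMod n` whose first projection is onto is the graph
`{(x, y) | y ≡ b * x (mod d)}` of a unique divisor `d ∣ n` and slope `b : ZMod d`; so there are
`σ₁ n = ∑_{d ∣ n} d` of them. The second projection is onto as well iff `b` is a unit, which
gives `∑_{d ∣ n} φ d = n` subgroups. By symmetry and inclusion–exclusion the count is
`2 σ₁ (p ^ i) - p ^ i`, and a geometric sum turns this into the closed forms.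
-/

open AddSubgroup

theorem card_subtype_or_add_card_subtype_and {α : Type*} [Finite α] (P Q : α → Prop) :
    Nat.card {x // P x ∨ Q x} + Nat.card {x // P x ∧ Q x} =
      Nat.card {x // P x} + Nat.card {x // Q x} :=
  Set.ncard_union_add_ncard_inter {x | P x} {x | Q x}

theorem card_map_snd_eq_top_eq_card_map_fst_eq_top {G G' : Type*} [AddGroup G] [AddGroup G'] :
    Nat.card {H : AddSubgroup (G × G') // H.map (AddMonoidHom.snd _ _) = ⊤} =
      Nat.card {H : AddSubgroup (G' × G) // H.map (AddMonoidHom.fst _ _) = ⊤} :=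
  Nat.card_congr <|
    (AddEquiv.prodComm.mapAddSubgroup : AddSubgroup (G × G') ≃o _).toEquiv.subtypeEquiv
      fun H => by
        show _ ↔ (H.map _).map _ = ⊤
        rw [map_map]
        rfl

namespace ZMod

variable {n : ℕ}

theorem addSubgroup_eq_top_iff_exists_isUnit (K : AddSubgroup (ZMod n)) :
    K = ⊤ ↔ ∃ u ∈ K, IsUnit u := by
  refine ⟨fun hK => ⟨1, hK ▸ mem_top 1, isUnit_one⟩, ?_⟩
  rintro ⟨u, huK, hu⟩
  refine eq_top_iff.2 fun y _ => ?_
  have hy : y = ((y * hu.unit⁻¹ : ZMod n).cast : ℤ) • u := by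
    rw [zsmul_eq_mul, intCast_zmod_cast, mul_assoc, hu.val_inv_mul, mul_one]
  exact hy ▸ zsmul_mem huK _

theorem exists_dvd_forall_mem_iff_castHom_eq_zero (K : AddSubgroup (ZMod n)) :
    ∃ d, ∃ hd : d ∣ n, ∀ x, x ∈ K ↔ castHom hd (ZMod d) x = 0 := by
  obtain ⟨g, hg⟩ := Int.subgroup_cyclic (K.comap (Int.castAddHom (ZMod n)))
  rw [← zmultiples_eq_closure] at hg
  have hmem (k : ℤ) : (k : ZMod n) ∈ K ↔ (g.natAbs : ℤ) ∣ k := by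
    rw [Int.natAbs_dvd, ← Int.mem_zmultiples_iff, ← hg]
    rfl
  have hd : g.natAbs ∣ n := by exact_mod_cast (hmem n).1 (by simp)
  refine ⟨g.natAbs, hd, fun x => ?_⟩
  rw [← intCast_zmod_cast x, hmem, castHom_apply, cast_intCast hd, intCast_zmod_eq_zero_iff_dvd]

section slopeSubgroup

variable {d : ℕ}

def slopeSubgroup (hd : d ∣ n) (b : ZMod d) : AddSubgroup (ZMod n × ZMod n) :=
  ((castHom hd (ZMod d)).toAddMonoidHom.comp (AddMonoidHom.snd _ _) -
    (AddMonoidHom.mulLeft b).comp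
      ((castHom hd (ZMod d)).toAddMonoidHom.comp (AddMonoidHom.fst _ _))).ker

variable {hd : d ∣ n} {b : ZMod d}

theorem mem_slopeSubgroup {x : ZMod n × ZMod n} :
    x ∈ slopeSubgroup hd b ↔ castHom hd (ZMod d) x.2 = b * castHom hd (ZMod d) x.1 := by
  simp [slopeSubgroup, sub_eq_zero]

theorem inr_mem_slopeSubgroup {y : ZMod n} :
    (0, y) ∈ slopeSubgroup hd b ↔ castHom hd (ZMod d) y = 0 := by
  simp [mem_slopeSubgroup]

theorem map_fst_slopeSubgroup : (slopeSubgroup hd b).map (AddMonoidHom.fst _ _) = ⊤ := by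
  obtain ⟨b', rfl⟩ := castHom_surjective hd b
  exact eq_top_iff.2 fun x _ => ⟨(x, b' * x), mem_slopeSubgroup.2 (map_mul _ _ _), rfl⟩

theorem map_snd_slopeSubgroup_eq_top_iff :
    (slopeSubgroup hd b).map (AddMonoidHom.snd _ _) = ⊤ ↔ IsUnit b := by
  constructor
  · intro h
    obtain ⟨x, hx, hx1 : x.2 = 1⟩ := mem_map.1 (h ▸ mem_top (1 : ZMod n))
    rw [mem_slopeSubgroup, hx1, map_one] at hx
    exact .of_mul_eq_one _ hx.symm
  · rintro ⟨u, rfl⟩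
    refine eq_top_iff.2 fun y _ => ?_
    obtain ⟨x, hx⟩ := castHom_surjective hd (↑u⁻¹ * castHom hd (ZMod d) y)
    exact ⟨(x, y), mem_slopeSubgroup.2 (by rw [hx, Units.mul_inv_cancel_left]), rfl⟩

end slopeSubgroup

theorem injective_slopeSubgroup :
    Function.Injective fun s : Σ d : n.divisors, ZMod d =>
      slopeSubgroup (Nat.dvd_of_mem_divisors s.1.2) s.2 := by
  have hdvd {d d' : ℕ} {hd : d ∣ n} {hd' : d' ∣ n} {b : ZMod d} {b' : ZMod d'}
      (h : slopeSubgroup hd b = slopeSubgroup hd' b') : d' ∣ d := by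
    have hmem : (0, (d : ZMod n)) ∈ slopeSubgroup hd b := by
      rw [inr_mem_slopeSubgroup, map_natCast, natCast_self]
    rwa [h, inr_mem_slopeSubgroup, map_natCast, natCast_eq_zero_iff] at hmem
  rintro ⟨⟨d, hd⟩, b⟩ ⟨⟨d', hd'⟩, b'⟩ h
  dsimp only at h
  obtain rfl : d = d' := Nat.dvd_antisymm (hdvd h.symm) (hdvd h)
  obtain ⟨b₀, rfl⟩ := castHom_surjective (Nat.dvd_of_mem_divisors hd) b
  have hmem : (1, b₀) ∈ slopeSubgroup (Nat.dvd_of_mem_divisors hd)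
      (castHom (Nat.dvd_of_mem_divisors hd) (ZMod d) b₀) := by
    rw [mem_slopeSubgroup, map_one, mul_one]
  rw [h, mem_slopeSubgroup, map_one, mul_one] at hmem
  rw [hmem]

theorem exists_slopeSubgroup_eq [NeZero n] {H : AddSubgroup (ZMod n × ZMod n)}
    (hH : H.map (AddMonoidHom.fst _ _) = ⊤) :
    ∃ s : Σ d : n.divisors, ZMod d, slopeSubgroup (Nat.dvd_of_mem_divisors s.1.2) s.2 = H := by
  obtain ⟨d, hd, hK⟩ :=
    exists_dvd_forall_mem_iff_castHom_eq_zero (H.comap (AddMonoidHom.inr _ _))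
  obtain ⟨⟨x₁, b₀⟩, hb₀, hx₁ : x₁ = 1⟩ := mem_map.1 (hH ▸ mem_top (1 : ZMod n))
  subst hx₁
  have hgraph (x : ZMod n) : (x, x * b₀) ∈ H := by
    simpa [Prod.smul_mk, zsmul_eq_mul] using zsmul_mem hb₀ (x.cast : ℤ)
  refine ⟨⟨⟨d, Nat.mem_divisors.2 ⟨hd, NeZero.ne n⟩⟩, castHom hd (ZMod d) b₀⟩, ?_⟩
  ext ⟨x, y⟩
  have hsplit : (x, y) ∈ H ↔ y - x * b₀ ∈ H.comap (AddMonoidHom.inr _ _) := by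
    have h := add_mem_cancel_left (hgraph x) (y := (0, y - x * b₀))
    rwa [Prod.mk_add_mk, add_zero, add_sub_cancel] at h
  rw [mem_slopeSubgroup, hsplit, hK, map_sub, map_mul, sub_eq_zero, mul_comm]

open scoped ArithmeticFunction.sigma in
theorem card_map_fst_eq_top [NeZero n] :
    Nat.card {H : AddSubgroup (ZMod n × ZMod n) // H.map (AddMonoidHom.fst _ _) = ⊤} =
      σ 1 n := by
  have (d : n.divisors) : NeZero (d : ℕ) := ⟨(Nat.pos_of_mem_divisors d.2).ne'⟩
  let e : (Σ d : n.divisors, ZMod d) ≃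
      {H : AddSubgroup (ZMod n × ZMod n) // H.map (AddMonoidHom.fst _ _) = ⊤} :=
    Equiv.ofBijective (fun s => ⟨_, map_fst_slopeSubgroup⟩)
      ⟨fun s t h => injective_slopeSubgroup (congrArg Subtype.val h),
        fun H => (exists_slopeSubgroup_eq H.2).imp fun _ hs => Subtype.ext hs⟩
  rw [← Nat.card_congr e, Nat.card_sigma, ArithmeticFunction.sigma_one_apply]
  simp_rw [Nat.card_zmod]
  exact Finset.sum_coe_sort n.divisors (fun d : ℕ => d)

theorem card_map_fst_eq_top_and_map_snd_eq_top [NeZero n] :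
    Nat.card {H : AddSubgroup (ZMod n × ZMod n) //
      H.map (AddMonoidHom.fst _ _) = ⊤ ∧ H.map (AddMonoidHom.snd _ _) = ⊤} = n := by
  have (d : n.divisors) : NeZero (d : ℕ) := ⟨(Nat.pos_of_mem_divisors d.2).ne'⟩
  let e : (Σ d : n.divisors, (ZMod d)ˣ) ≃ {H : AddSubgroup (ZMod n × ZMod n) //
      H.map (AddMonoidHom.fst _ _) = ⊤ ∧ H.map (AddMonoidHom.snd _ _) = ⊤} :=
    Equiv.ofBijective
      (fun s => ⟨_, map_fst_slopeSubgroup, map_snd_slopeSubgroup_eq_top_iff.2 s.2.isUnit⟩)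
      ⟨fun s t h => (injective_slopeSubgroup.comp
          (Function.injective_id.sigma_map fun _ => Units.val_injective)) (congrArg Subtype.val h),
        fun H => by
          obtain ⟨s, hs⟩ := exists_slopeSubgroup_eq H.2.1
          have hu := map_snd_slopeSubgroup_eq_top_iff.1 (hs ▸ H.2.2)
          exact ⟨⟨s.1, hu.unit⟩, Subtype.ext hs⟩⟩
  rw [← Nat.card_congr e, Nat.card_sigma]
  simp_rw [Nat.card_eq_fintype_card, card_units_eq_totient]
  rw [Finset.sum_coe_sort, Nat.sum_totient]

theorem pow_pred_nsmul_eq_zero_iff {p i : ℕ} (hp : p.Prime) (hi : i ≠ 0) (x : ZMod (p ^ i)) :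
    p ^ (i - 1) • x = 0 ↔ ¬IsUnit x := by
  have : NeZero (p ^ i) := ⟨pow_ne_zero i hp.ne_zero⟩
  have hdvd (m : ℕ) : p ^ i ∣ p ^ (i - 1) * m ↔ p ∣ m := by
    rw [← pow_sub_one_mul hi, Nat.mul_dvd_mul_iff_left (pow_pos hp.pos _)]
  rw [← natCast_zmod_val x, nsmul_eq_mul, ← Nat.cast_mul, natCast_eq_zero_iff, hdvd,
    isUnit_iff_coprime, Nat.coprime_pow_right_iff (Nat.pos_of_ne_zero hi), Nat.coprime_comm,
    hp.coprime_iff_not_dvd, not_not]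

theorem exponent_eq_iff_map_fst_eq_top_or_map_snd_eq_top {p i : ℕ} (hp : p.Prime) (hi : i ≠ 0)
    (H : AddSubgroup (ZMod (p ^ i) × ZMod (p ^ i))) :
    AddMonoid.exponent H = p ^ i ↔
      H.map (AddMonoidHom.fst _ _) = ⊤ ∨ H.map (AddMonoidHom.snd _ _) = ⊤ := by
  have hn (x : ZMod (p ^ i)) : p ^ i • x = 0 := by rw [nsmul_eq_mul, natCast_self, zero_mul]
  have hdvd : AddMonoid.exponent H ∣ p ^ i :=
    AddMonoid.exponent_dvd_of_forall_nsmul_eq_zero fun h => Subtype.ext <| Prod.ext (hn _) (hn _)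
  have hexp : AddMonoid.exponent H = p ^ i ↔ ¬AddMonoid.exponent H ∣ p ^ (i - 1) := by
    obtain ⟨k, hk, hke⟩ := (Nat.dvd_prime_pow hp).1 hdvd
    rw [hke, Nat.pow_dvd_pow_iff_le_right hp.one_lt, (Nat.pow_right_injective hp.two_le).eq_iff]
    omega
  rw [hexp, AddMonoid.exponent_dvd_iff_forall_nsmul_eq_zero, addSubgroup_eq_top_iff_exists_isUnit,
    addSubgroup_eq_top_iff_exists_isUnit]
  simp only [Subtype.forall, Subtype.ext_iff, Prod.ext_iff, mem_map, AddSubmonoidClass.coe_nsmul,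
    Prod.smul_fst, Prod.smul_snd, ZeroMemClass.coe_zero, Prod.fst_zero, Prod.snd_zero,
    pow_pred_nsmul_eq_zero_iff hp hi, AddMonoidHom.coe_fst, AddMonoidHom.coe_snd,
    exists_exists_and_eq_and, not_forall, exists_prop, not_and_or, not_not, and_or_left, exists_or]

end ZMod

theorem two_mul_sum_range_succ_pow_sub_pow {p : ℕ} (hp : 2 ≤ p) (i : ℕ) :
    2 * ∑ k ∈ Finset.range (i + 1), p ^ k - p ^ i = 1 + (p + 1) * (p ^ i - 1) / (p - 1) ∧
    2 * ∑ k ∈ Finset.range (i + 1), p ^ k - p ^ i = (p ^ (i + 1) + p ^ i - 2) / (p - 1) := by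
  obtain ⟨q, rfl⟩ : ∃ q, p = q + 1 := ⟨p - 1, by omega⟩
  have hq : 0 < q := by omega
  have hS := geom_sum_mul_of_one_le (le_add_self : 1 ≤ q + 1) i
  rw [Finset.sum_range_succ]
  set S := ∑ k ∈ Finset.range i, (q + 1) ^ k
  have hP : (q + 1) ^ i = S * q + 1 := by
    rw [Nat.add_sub_cancel] at hS
    have := Nat.one_le_pow i (q + 1) (by omega)
    omega
  rw [pow_succ, hP, Nat.add_sub_cancel, Nat.add_sub_cancel, ← mul_assoc, Nat.mul_div_cancel _ hq]
  have h : (S * q + 1) * (q + 1) + (S * q + 1) = q * (2 * S + (S * q + 1)) + 2 := by ring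
  have hL : 2 * (S + (S * q + 1)) - (S * q + 1) = 2 * S + (S * q + 1) := by omega
  rw [h, Nat.add_sub_cancel, Nat.mul_div_cancel_left _ hq, hL]
  exact ⟨by ring, rfl⟩

open scoped ArithmeticFunction.sigma in
theorem stmt_2 (p : ℕ) (hp : p.Prime) (i : ℕ) (hi : 1 ≤ i) :
    Nat.card {H : AddSubgroup (ZMod (p ^ i) × ZMod (p ^ i)) //
        AddMonoid.exponent H = p ^ i} =
      1 + (p + 1) * (p ^ i - 1) / (p - 1) ∧
    Nat.card {H : AddSubgroup (ZMod (p ^ i) × ZMod (p ^ i)) //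
        AddMonoid.exponent H = p ^ i} =
      (p ^ (i + 1) + p ^ i - 2) / (p - 1) := by
  have : NeZero (p ^ i) := ⟨pow_ne_zero i hp.ne_zero⟩
  let P (H : AddSubgroup (ZMod (p ^ i) × ZMod (p ^ i))) := H.map (AddMonoidHom.fst _ _) = ⊤
  let Q (H : AddSubgroup (ZMod (p ^ i) × ZMod (p ^ i))) := H.map (AddMonoidHom.snd _ _) = ⊤
  have hcard : Nat.card {H : AddSubgroup (ZMod (p ^ i) × ZMod (p ^ i)) //
      AddMonoid.exponent H = p ^ i} + p ^ i = 2 * σ 1 (p ^ i) :=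
    calc _ = Nat.card {H // P H ∨ Q H} + Nat.card {H // P H ∧ Q H} := by
          rw [ZMod.card_map_fst_eq_top_and_map_snd_eq_top]
          exact congrArg (· + _) <| Nat.card_congr <| Equiv.subtypeEquivRight fun H =>
            ZMod.exponent_eq_iff_map_fst_eq_top_or_map_snd_eq_top hp (Nat.one_le_iff_ne_zero.1 hi) H
      _ = Nat.card {H // P H} + Nat.card {H // Q H} := card_subtype_or_add_card_subtype_and P Q
      _ = 2 * σ 1 (p ^ i) := by
          rw [card_map_snd_eq_top_eq_card_map_fst_eq_top, ZMod.card_map_fst_eq_top, two_mul]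
  rw [ArithmeticFunction.sigma_one_apply_prime_pow hp] at hcard
  rw [Nat.eq_sub_of_add_eq hcard]
  exact two_mul_sum_range_succ_pow_sub_pow hp.two_le i
end

section
/- The total number of subgroups of Z_{p^{λ1}} × Z_{p^{λ2}}, where λ1 ≥ λ2 ≥ 1, equals [(λ1−λ2+1)p^{λ2+2} − (λ1−λ2−1)p^{λ2+1} − (λ1+λ2+3)p + (λ1+λ2+1)] / (p−1)^2. -/
/-!
A subgroup `I ≤ G × H` is determined by its projection `A ≤ G`, its slice
`B = {y | (0, y) ∈ I}` and the homomorphism `A →+ H ⧸ B` of which it is the graph, so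
`|Sub(G × H)| = ∑_{A, B} |Hom(A, H ⧸ B)|`. In a finite cyclic group the subgroups correspond to
the divisors of the order, and there are `gcd(a, b)` homomorphisms from a cyclic group of order
`a` to one of order `b`. For `G = ℤ/p^λ₁` and `H = ℤ/p^λ₂` this gives
`∑_{i ≤ λ₁, j ≤ λ₂} p^min(i, j)`, and two inductions evaluate that sum times `(p - 1)²`.
-/

namespace AddSubgroup

variable {G H : Type*} [AddCommGroup G] [AddCommGroup H]

def ofHomToQuotient (A : AddSubgroup G) (B : AddSubgroup H) (φ : A →+ H ⧸ B) :
    AddSubgroup (G × H) where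
  carrier := {z | ∃ h : z.1 ∈ A, (z.2 : H ⧸ B) = φ ⟨z.1, h⟩}
  zero_mem' := ⟨A.zero_mem, (map_zero φ).symm⟩
  add_mem' := by
    rintro _ _ ⟨ha, e⟩ ⟨hb, f⟩
    refine ⟨A.add_mem ha hb, ?_⟩
    rw [Prod.snd_add, QuotientAddGroup.mk_add, e, f]
    exact (map_add φ _ _).symm
  neg_mem' := by
    rintro _ ⟨ha, e⟩
    refine ⟨A.neg_mem ha, ?_⟩
    rw [Prod.snd_neg, QuotientAddGroup.mk_neg, e]
    exact (map_neg φ _).symm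

variable {A : AddSubgroup G} {B : AddSubgroup H} {φ : A →+ H ⧸ B}

theorem mem_ofHomToQuotient {z : G × H} :
    z ∈ ofHomToQuotient A B φ ↔ ∃ h : z.1 ∈ A, (z.2 : H ⧸ B) = φ ⟨z.1, h⟩ :=
  Iff.rfl

theorem map_fst_ofHomToQuotient : (ofHomToQuotient A B φ).map (AddMonoidHom.fst G H) = A := by
  ext x
  refine ⟨fun ⟨z, ⟨hz, _⟩, hzx⟩ => hzx ▸ hz, fun hx => ?_⟩
  obtain ⟨y, hy⟩ := QuotientAddGroup.mk_surjective (φ ⟨x, hx⟩)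
  exact ⟨(x, y), ⟨hx, hy⟩, rfl⟩

theorem comap_inr_ofHomToQuotient : (ofHomToQuotient A B φ).comap (AddMonoidHom.inr G H) = B := by
  ext y
  change (∃ h : (0 : G) ∈ A, (y : H ⧸ B) = φ ⟨0, h⟩) ↔ y ∈ B
  refine ⟨fun ⟨_, e⟩ => (QuotientAddGroup.eq_zero_iff y).1 (e.trans (map_zero φ)), fun hy => ?_⟩
  exact ⟨A.zero_mem, ((QuotientAddGroup.eq_zero_iff y).2 hy).trans (map_zero φ).symm⟩

theorem ofHomToQuotient_injective :
    Function.Injective fun t : Σ (A : AddSubgroup G) (B : AddSubgroup H), A →+ H ⧸ B =>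
      ofHomToQuotient t.1 t.2.1 t.2.2 := by
  rintro ⟨A, B, φ⟩ ⟨A', B', φ'⟩ (h : ofHomToQuotient A B φ = ofHomToQuotient A' B' φ')
  obtain rfl : A = A' := by
    rw [← map_fst_ofHomToQuotient (φ := φ), h, map_fst_ofHomToQuotient]
  obtain rfl : B = B' := by
    rw [← comap_inr_ofHomToQuotient (φ := φ), h, comap_inr_ofHomToQuotient]
  obtain rfl : φ = φ' := by
    ext x
    obtain ⟨y, hy⟩ := QuotientAddGroup.mk_surjective (φ x)
    have hxy : ((x : G), y) ∈ ofHomToQuotient A B φ' := h ▸ ⟨x.2, hy⟩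
    exact hy.symm.trans hxy.2
  rfl

theorem ofHomToQuotient_surjective :
    Function.Surjective fun t : Σ (A : AddSubgroup G) (B : AddSubgroup H), A →+ H ⧸ B =>
      ofHomToQuotient t.1 t.2.1 t.2.2 := by
  intro I
  set A := I.map (AddMonoidHom.fst G H)
  set B := I.comap (AddMonoidHom.inr G H)
  let π := (AddMonoidHom.fst G H).addSubgroupMap I
  have hπ : Function.Surjective π := AddMonoidHom.addSubgroupMap_surjective _ I
  let ψ : I →+ H ⧸ B := (QuotientAddGroup.mk' B).comp ((AddMonoidHom.snd G H).comp I.subtype)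
  have hker : π.ker ≤ ψ.ker := by
    rintro ⟨⟨x, y⟩, hz⟩ hx
    obtain rfl : x = 0 := congrArg Subtype.val hx
    exact (QuotientAddGroup.eq_zero_iff y).2 hz
  let φ : A →+ H ⧸ B :=
    π.liftOfRightInverse (Function.surjInv hπ) (Function.rightInverse_surjInv hπ) ⟨ψ, hker⟩
  have hφ : ∀ z (hz : z ∈ I), φ (π ⟨z, hz⟩) = z.2 :=
    fun z hz => π.liftOfRightInverse_comp_apply _ _ ⟨ψ, hker⟩ ⟨z, hz⟩
  refine ⟨⟨A, B, φ⟩, ?_⟩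
  ext ⟨x, y⟩
  refine ⟨?_, fun hxy => ⟨⟨_, hxy, rfl⟩, (hφ _ hxy).symm⟩⟩
  rintro ⟨hx, e⟩
  obtain ⟨⟨x, y'⟩, hxy', rfl⟩ := id hx
  have : (0, -y + y') ∈ I := QuotientAddGroup.eq.1 (e.trans (hφ _ hxy'))
  simpa using I.sub_mem hxy' this

theorem card_addSubgroup_prod [Finite G] [Finite H] [Fintype (AddSubgroup G)]
    [Fintype (AddSubgroup H)] :
    Nat.card (AddSubgroup (G × H)) =
      ∑ A : AddSubgroup G, ∑ B : AddSubgroup H, Nat.card (A →+ H ⧸ B) := by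
  have (A : AddSubgroup G) (B : AddSubgroup H) : Finite (A →+ H ⧸ B) :=
    Finite.of_injective _ DFunLike.coe_injective
  rw [← Nat.card_eq_of_bijective _ ⟨ofHomToQuotient_injective, ofHomToQuotient_surjective⟩]
  simp only [Nat.card_sigma]

end AddSubgroup

section Cyclic

variable {G : Type*} [AddCommGroup G] [IsAddCyclic G] [Finite G]

theorem card_addMonoidHom_of_isAddCyclic {A : Type*} [AddGroup A] [IsAddCyclic A] :
    Nat.card (A →+ G) = Nat.gcd (Nat.card A) (Nat.card G) := by
  have e : (nsmulAddMonoidHom (Nat.card A) : G →+ G).ker ≃ (A →+ G) :=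
    ((zmultiplesHom G).subtypeEquiv fun q => by simp).trans <|
      (ZMod.lift _).trans (AddEquiv.addMonoidHomCongrLeft (zmodAddCyclicAddEquiv ‹_›)).toEquiv
  rw [← Nat.card_congr e, IsAddCyclic.card_nsmulAddMonoidHom_ker, Nat.gcd_comm]

theorem AddSubgroup.eq_ker_nsmul_card (K : AddSubgroup G) :
    K = (nsmulAddMonoidHom (Nat.card K) : G →+ G).ker := by
  refine eq_of_le_of_card_ge (fun x hx => ?_) ?_
  · exact congrArg Subtype.val (card_nsmul_eq_zero' (x := (⟨x, hx⟩ : K)))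
  · rw [IsAddCyclic.card_nsmulAddMonoidHom_ker, Nat.gcd_eq_right K.card_addSubgroup_dvd_card]

theorem sum_addSubgroup_eq_sum_divisors [Fintype (AddSubgroup G)] {M : Type*} [AddCommMonoid M]
    (f : ℕ → M) : ∑ K : AddSubgroup G, f (Nat.card K) = ∑ d ∈ (Nat.card G).divisors, f d := by
  refine Finset.sum_nbij (fun K => Nat.card K) (fun K _ => ?_) (fun K _ L _ h => ?_)
    (fun d hd => ?_) (fun _ _ => rfl)
  · exact Nat.mem_divisors.2 ⟨K.card_addSubgroup_dvd_card, Nat.card_pos.ne'⟩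
  · have h : Nat.card K = Nat.card L := h
    rw [K.eq_ker_nsmul_card, L.eq_ker_nsmul_card, h]
  · refine ⟨(nsmulAddMonoidHom d).ker, Finset.mem_coe.2 (Finset.mem_univ _), ?_⟩
    change Nat.card _ = d
    rw [IsAddCyclic.card_nsmulAddMonoidHom_ker]
    exact Nat.gcd_eq_right (Nat.mem_divisors.1 hd).1

theorem card_addSubgroup_prod_of_isAddCyclic {H : Type*} [AddCommGroup H] [IsAddCyclic H]
    [Finite H] :
    Nat.card (AddSubgroup (G × H)) =
      ∑ d ∈ (Nat.card G).divisors, ∑ e ∈ (Nat.card H).divisors, Nat.gcd d e := by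
  let _ : Fintype (AddSubgroup G) := Fintype.ofFinite _
  let _ : Fintype (AddSubgroup H) := Fintype.ofFinite _
  have card_hom (A : AddSubgroup G) (B : AddSubgroup H) :
      Nat.card (A →+ H ⧸ B) = Nat.gcd (Nat.card A) (Nat.card H / Nat.card B) := by
    have : IsAddCyclic (H ⧸ B) :=
      isAddCyclic_of_surjective _ (QuotientAddGroup.mk'_surjective B)
    rw [card_addMonoidHom_of_isAddCyclic, ← B.index_eq_card,
      Nat.eq_div_of_mul_eq_left Nat.card_pos.ne' B.index_mul_card]
  simp only [AddSubgroup.card_addSubgroup_prod, card_hom]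
  rw [sum_addSubgroup_eq_sum_divisors fun a =>
    ∑ B : AddSubgroup H, Nat.gcd a (Nat.card H / Nat.card B)]
  refine Finset.sum_congr rfl fun d _ => ?_
  rw [sum_addSubgroup_eq_sum_divisors fun b => Nat.gcd d (Nat.card H / b), Nat.sum_div_divisors]

end Cyclic

section MinPowSum

open Finset

variable {R : Type*}

section CommSemiring

variable [CommSemiring R] (x : R)

def minPowSum (a b : ℕ) : R :=
  ∑ i ∈ range (a + 1), ∑ j ∈ range (b + 1), x ^ min i j

@[norm_cast]
theorem Nat.cast_minPowSum (n a b : ℕ) : ((minPowSum n a b : ℕ) : R) = minPowSum (n : R) a b := by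
  simp [minPowSum]

theorem minPowSum_comm (a b : ℕ) : minPowSum x a b = minPowSum x b a := by
  rw [minPowSum, minPowSum, sum_comm]
  simp_rw [min_comm]

theorem minPowSum_succ_left {a b : ℕ} (h : b ≤ a + 1) :
    minPowSum x (a + 1) b = minPowSum x a b + ∑ j ∈ range (b + 1), x ^ j := by
  rw [minPowSum, sum_range_succ, ← minPowSum]
  congr 1
  refine sum_congr rfl fun j hj => ?_
  rw [min_eq_right (by have := mem_range.1 hj; omega)]

end CommSemiring

variable [CommRing R] (x : R)

theorem sub_one_sq_mul_minPowSum_self (l : ℕ) :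
    (x - 1) ^ 2 * minPowSum x l l =
      x ^ (l + 2) + x ^ (l + 1) - (2 * l + 3) * x + (2 * l + 1) := by
  induction l with
  | zero =>
    rw [show minPowSum x 0 0 = 1 by simp [minPowSum]]
    push_cast
    ring
  | succ l ih =>
    rw [minPowSum_succ_left x le_rfl, minPowSum_comm, minPowSum_succ_left x (by omega)]
    push_cast
    linear_combination ih + (x - 1) * geom_sum_mul x (l + 1) + (x - 1) * geom_sum_mul x (l + 2)

theorem sub_one_sq_mul_minPowSum_add_left (k l : ℕ) :
    (x - 1) ^ 2 * minPowSum x (l + k) l =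
      (k + 1) * x ^ (l + 2) - (k - 1) * x ^ (l + 1) - (2 * l + k + 3) * x + (2 * l + k + 1) := by
  induction k with
  | zero => linear_combination sub_one_sq_mul_minPowSum_self x l
  | succ k ih =>
    rw [← add_assoc, minPowSum_succ_left x (by omega)]
    push_cast
    linear_combination ih + (x - 1) * geom_sum_mul x (l + 1)

end MinPowSum

theorem Nat.gcd_pow_pow (p i j : ℕ) : Nat.gcd (p ^ i) (p ^ j) = p ^ min i j := by
  rcases le_total i j with h | h
  · rw [Nat.gcd_eq_left (pow_dvd_pow p h), min_eq_left h]
  · rw [Nat.gcd_eq_right (pow_dvd_pow p h), min_eq_right h]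

theorem card_addSubgroup_zmod_prime_pow_prod {p : ℕ} (hp : p.Prime) (a b : ℕ) :
    Nat.card (AddSubgroup (ZMod (p ^ a) × ZMod (p ^ b))) = minPowSum p a b := by
  have : NeZero (p ^ a) := ⟨pow_ne_zero a hp.ne_zero⟩
  have : NeZero (p ^ b) := ⟨pow_ne_zero b hp.ne_zero⟩
  rw [card_addSubgroup_prod_of_isAddCyclic, Nat.card_zmod, Nat.card_zmod,
    Nat.divisors_prime_pow hp, Nat.divisors_prime_pow hp]
  simp [Nat.gcd_pow_pow, minPowSum]

theorem stmt_3_general (p : ℕ) (hp : p.Prime) (lam1 lam2 : ℕ)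
    (h21 : lam2 ≤ lam1) :
    (Nat.card (AddSubgroup (ZMod (p ^ lam1) × ZMod (p ^ lam2))) : ℤ) =
      (((lam1 : ℤ) - lam2 + 1) * (p : ℤ) ^ (lam2 + 2)
        - ((lam1 : ℤ) - lam2 - 1) * (p : ℤ) ^ (lam2 + 1)
        - ((lam1 : ℤ) + lam2 + 3) * p + ((lam1 : ℤ) + lam2 + 1))
        / ((p : ℤ) - 1) ^ 2 := by
  obtain ⟨k, rfl⟩ := Nat.exists_eq_add_of_le h21
  have hp1 : (p : ℤ) - 1 ≠ 0 := sub_ne_zero.2 (by exact_mod_cast hp.one_lt.ne')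
  rw [card_addSubgroup_zmod_prime_pow_prod hp, Nat.cast_minPowSum,
    ← Int.mul_ediv_cancel_left (minPowSum (p : ℤ) (lam2 + k) lam2) (pow_ne_zero 2 hp1),
    sub_one_sq_mul_minPowSum_add_left]
  push_cast
  ring_nf

theorem stmt_3 (p : ℕ) (hp : p.Prime) (lam1 lam2 : ℕ)
    (h21 : lam2 ≤ lam1) (h2 : 1 ≤ lam2) :
    (Nat.card (AddSubgroup (ZMod (p ^ lam1) × ZMod (p ^ lam2))) : ℤ) =
      (((lam1 : ℤ) - lam2 + 1) * (p : ℤ) ^ (lam2 + 2)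
        - ((lam1 : ℤ) - lam2 - 1) * (p : ℤ) ^ (lam2 + 1)
        - ((lam1 : ℤ) + lam2 + 3) * p + ((lam1 : ℤ) + lam2 + 1))
        / ((p : ℤ) - 1) ^ 2 :=
  stmt_3_general p hp lam1 lam2 h21
end

section
/- For every m, n ≥ 1 and E dividing lcm(m,n), the number s_E(m,n) of subgroups of exponent E of Z_m × Z_n equals ∑ gcd(i,j), the sum over pairs of divisors i of m and j of n with lcm(i,j) = E. -/
/-!
For finite cyclic groups `A`, `B` and `H ≤ A × B`, the exponent of `H` is
`lcm (|π₁ H|, |π₂ H|)`, since the projections are cyclic and `H` embeds in `π₁ H × π₂ H`. So one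
counts, for subgroups `P ≤ A`, `Q ≤ B` of orders `i`, `j`, the subgroups projecting onto `P` and
`Q`: these are the subdirect products of `P × Q ≅ ℤ/i × ℤ/j`. Goursat's lemma for cyclic groups
says that those are exactly the subgroups `{(x, y) | u x ≡ y mod c}` with `c ∣ gcd i j` and `u` a
unit mod `c`, so there are `∑_{c ∣ gcd i j} φ c = gcd i j` of them. Finally a finite cyclic group
has exactly one subgroup of each order dividing its order.
-/

open Finset AddSubgroup

namespace AddSubgroup

variable {A B G K : Type*} [AddGroup A] [AddGroup B] [AddGroup G] [AddGroup K]

theorem exponent_eq_lcm_exponent_map (H : AddSubgroup (A × B)) :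
    AddMonoid.exponent H = Nat.lcm (AddMonoid.exponent (H.map (AddMonoidHom.fst A B)))
      (AddMonoid.exponent (H.map (AddMonoidHom.snd A B))) := by
  set p₁ := (AddMonoidHom.fst A B).addSubgroupMap H
  set p₂ := (AddMonoidHom.snd A B).addSubgroupMap H
  have hinj : Function.Injective (p₁.prod p₂) := fun x y hxy =>
    Subtype.ext (Prod.ext (congrArg (fun z => (z.1 : A)) hxy) (congrArg (fun z => (z.2 : B)) hxy))
  refine Nat.dvd_antisymm ?_ (Nat.lcm_dvd ?_ ?_)
  · have := AddMonoid.exponent_dvd_of_addMonoidHom _ hinj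
    rwa [AddMonoid.exponent_prod, lcm_eq_nat_lcm] at this
  · exact AddMonoidHom.exponent_dvd (AddMonoidHom.addSubgroupMap_surjective _ H)
  · exact AddMonoidHom.exponent_dvd (AddMonoidHom.addSubgroupMap_surjective _ H)

def withProjections (P : AddSubgroup G) (Q : AddSubgroup K) : Set (AddSubgroup (G × K)) :=
  {H | H.map (AddMonoidHom.fst G K) = P ∧ H.map (AddMonoidHom.snd G K) = Q}

theorem mem_withProjections {P : AddSubgroup G} {Q : AddSubgroup K} {H : AddSubgroup (G × K)} :
    H ∈ withProjections P Q ↔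
      H.map (AddMonoidHom.fst G K) = P ∧ H.map (AddMonoidHom.snd G K) = Q :=
  Iff.rfl

theorem map_prodMap_map_fst (f : A →+ G) (g : B →+ K) (H : AddSubgroup (A × B)) :
    (H.map (f.prodMap g)).map (AddMonoidHom.fst G K) = (H.map (AddMonoidHom.fst A B)).map f := by
  rw [map_map, map_map]; rfl

theorem map_prodMap_map_snd (f : A →+ G) (g : B →+ K) (H : AddSubgroup (A × B)) :
    (H.map (f.prodMap g)).map (AddMonoidHom.snd G K) = (H.map (AddMonoidHom.snd A B)).map g := by
  rw [map_map, map_map]; rfl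

theorem map_comap_prodMap_of_mem_withProjections {f : A →+ G} {g : B →+ K}
    {H : AddSubgroup (G × K)} (hH : H ∈ withProjections f.range g.range) :
    (H.comap (f.prodMap g)).map (f.prodMap g) = H := by
  refine (map_comap_eq _ _).trans (inf_eq_right.mpr ?_)
  rintro ⟨x, y⟩ hxy
  obtain ⟨a, ha⟩ : x ∈ f.range := hH.1 ▸ mem_map_of_mem _ hxy
  obtain ⟨b, hb⟩ : y ∈ g.range := hH.2 ▸ mem_map_of_mem _ hxy
  exact ⟨(a, b), Prod.ext ha hb⟩

def withProjectionsEquivOfInjective {f : A →+ G} {g : B →+ K} (hf : Function.Injective f)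
    (hg : Function.Injective g) :
    withProjections (⊤ : AddSubgroup A) (⊤ : AddSubgroup B) ≃ withProjections f.range g.range where
  toFun H := ⟨H.1.map (f.prodMap g), by
    rw [mem_withProjections, map_prodMap_map_fst, map_prodMap_map_snd, H.2.1, H.2.2,
      ← AddMonoidHom.range_eq_map, ← AddMonoidHom.range_eq_map]
    exact ⟨rfl, rfl⟩⟩
  invFun H := ⟨H.1.comap (f.prodMap g), by
    have hH := map_comap_prodMap_of_mem_withProjections H.2
    refine ⟨map_injective hf ?_, map_injective hg ?_⟩
    · rw [← map_prodMap_map_fst f g, hH, H.2.1, AddMonoidHom.range_eq_map]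
    · rw [← map_prodMap_map_snd f g, hH, H.2.2, AddMonoidHom.range_eq_map]⟩
  left_inv H := Subtype.ext (comap_map_eq_self_of_injective (Prod.map_injective.mpr ⟨hf, hg⟩) _)
  right_inv H := Subtype.ext (map_comap_prodMap_of_mem_withProjections H.2)

theorem exists_zmod_injective_range_eq (P : AddSubgroup G) [IsAddCyclic P] :
    ∃ f : ZMod (Nat.card P) →+ G, Function.Injective f ∧ f.range = P := by
  refine ⟨P.subtype.comp (zmodAddCyclicAddEquiv ‹_›).toAddMonoidHom,
    P.subtype_injective.comp (AddEquiv.injective _), ?_⟩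
  rw [AddMonoidHom.range_comp, AddMonoidHom.range_eq_top.mpr (AddEquiv.surjective _),
    ← AddMonoidHom.range_eq_map, range_subtype]

end AddSubgroup

namespace IsAddCyclic

variable {G : Type*} [AddCommGroup G] [IsAddCyclic G] [Finite G]

theorem addSubgroup_eq_ker_nsmul_card (H : AddSubgroup G) :
    H = (nsmulAddMonoidHom (Nat.card H) : G →+ G).ker := by
  refine AddSubgroup.eq_of_le_of_card_ge (fun x hx => ?_) ?_
  · exact congrArg Subtype.val (card_nsmul_eq_zero' (x := (⟨x, hx⟩ : H)))
  · rw [card_nsmulAddMonoidHom_ker, Nat.gcd_eq_right H.card_addSubgroup_dvd_card]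

theorem addSubgroup_eq_of_card_eq {H K : AddSubgroup G} (h : Nat.card H = Nat.card K) :
    H = K := by
  rw [addSubgroup_eq_ker_nsmul_card H, addSubgroup_eq_ker_nsmul_card K, h]

theorem addSubgroup_eq_of_index_eq {H K : AddSubgroup G} (h : H.index = K.index) : H = K := by
  refine addSubgroup_eq_of_card_eq (Nat.eq_of_mul_eq_mul_right (Nat.pos_of_ne_zero
    H.index_ne_zero_of_finite) ?_)
  rw [card_mul_index, h, card_mul_index]

theorem sum_addSubgroup_card_eq_sum_divisors [Fintype (AddSubgroup G)] {M : Type*}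
    [AddCommMonoid M] (f : ℕ → M) :
    ∑ H : AddSubgroup G, f (Nat.card H) = ∑ d ∈ (Nat.card G).divisors, f d := by
  refine Finset.sum_nbij (fun H => Nat.card H) (fun H _ => ?_)
    (fun H _ K _ h => addSubgroup_eq_of_card_eq h) (fun d hd => ?_) (fun _ _ => rfl)
  · exact Nat.mem_divisors.mpr ⟨H.card_addSubgroup_dvd_card, Nat.card_pos.ne'⟩
  · refine ⟨(nsmulAddMonoidHom d : G →+ G).ker, Finset.mem_coe.mpr (mem_univ _), ?_⟩
    dsimp only
    rw [card_nsmulAddMonoidHom_ker, Nat.gcd_eq_right (Nat.dvd_of_mem_divisors hd)]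

end IsAddCyclic

namespace ZMod

variable {i j c : ℕ}

def twistedDiagonal (hci : c ∣ i) (hcj : c ∣ j) (u : ZMod c) : AddSubgroup (ZMod i × ZMod j) :=
  AddMonoidHom.eqLocus
    ((AddMonoidHom.mulLeft u).comp ((castHom hci (ZMod c)).toAddMonoidHom.comp
      (AddMonoidHom.fst _ _)))
    ((castHom hcj (ZMod c)).toAddMonoidHom.comp (AddMonoidHom.snd _ _))

theorem mem_twistedDiagonal {hci : c ∣ i} {hcj : c ∣ j} {u : ZMod c} {p : ZMod i × ZMod j} :
    p ∈ twistedDiagonal hci hcj u ↔ u * castHom hci (ZMod c) p.1 = castHom hcj (ZMod c) p.2 :=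
  Iff.rfl

theorem twistedDiagonal_mem_withProjections (hci : c ∣ i) (hcj : c ∣ j) (u : (ZMod c)ˣ) :
    twistedDiagonal hci hcj u ∈ withProjections ⊤ ⊤ := by
  refine ⟨eq_top_iff.mpr fun x _ => ?_, eq_top_iff.mpr fun y _ => ?_⟩
  · obtain ⟨y, hy⟩ := castHom_surjective hcj (u * castHom hci (ZMod c) x)
    exact ⟨(x, y), mem_twistedDiagonal.mpr hy.symm, rfl⟩
  · obtain ⟨x, hx⟩ := castHom_surjective hci (u⁻¹ * castHom hcj (ZMod c) y)
    refine ⟨(x, y), mem_twistedDiagonal.mpr ?_, rfl⟩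
    rw [hx, Units.mul_inv_cancel_left]

theorem goursatSnd_twistedDiagonal (hci : c ∣ i) (hcj : c ∣ j) (u : ZMod c) :
    (twistedDiagonal hci hcj u).goursatSnd = (castHom hcj (ZMod c)).toAddMonoidHom.ker := by
  ext y
  rw [mem_goursatSnd, mem_twistedDiagonal, map_zero, mul_zero, eq_comm]
  rfl

theorem index_ker_castHom (hcj : c ∣ j) : (castHom hcj (ZMod c)).toAddMonoidHom.ker.index = c := by
  rw [index_ker, AddMonoidHom.range_eq_top.mpr (castHom_surjective hcj), card_top, Nat.card_zmod]

theorem index_goursatSnd_twistedDiagonal (hci : c ∣ i) (hcj : c ∣ j) (u : ZMod c) :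
    (twistedDiagonal hci hcj u).goursatSnd.index = c := by
  rw [goursatSnd_twistedDiagonal, index_ker_castHom]

theorem twistedDiagonal_injective (hci : c ∣ i) (hcj : c ∣ j) :
    Function.Injective (twistedDiagonal hci hcj) := by
  intro u u' h
  obtain ⟨y, hy⟩ := castHom_surjective hcj u
  have hmem : ((1, y) : ZMod i × ZMod j) ∈ twistedDiagonal hci hcj u := by
    rw [mem_twistedDiagonal, map_one, mul_one, hy]
  rw [h, mem_twistedDiagonal, map_one, mul_one, hy] at hmem
  exact hmem.symm

theorem castHom_snd_eq_val_mul [NeZero i] {K : AddSubgroup (ZMod i × ZMod j)} (hcj : c ∣ j)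
    (hK : K.goursatSnd = (castHom hcj (ZMod c)).toAddMonoidHom.ker) {y₁ : ZMod j}
    (h₁ : (1, y₁) ∈ K) :
    ∀ p ∈ K, castHom hcj (ZMod c) p.2 = p.1.val * castHom hcj (ZMod c) y₁ := by
  intro p hp
  have hdiff : ((0 : ZMod i), p.2 - p.1.val • y₁) ∈ K := by
    convert sub_mem hp (nsmul_mem h₁ p.1.val) using 1
    ext <;> simp
  rw [← mem_goursatSnd, hK, AddMonoidHom.mem_ker, RingHom.toAddMonoidHom_eq_coe,
    AddMonoidHom.coe_coe, map_sub, map_nsmul, nsmul_eq_mul, sub_eq_zero] at hdiff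
  exact hdiff

theorem exists_twistedDiagonal_eq [NeZero i] [NeZero j] {K : AddSubgroup (ZMod i × ZMod j)}
    (hK : K ∈ withProjections ⊤ ⊤) :
    ∃ c, ∃ (hci : c ∣ i) (hcj : c ∣ j) (u : (ZMod c)ˣ), twistedDiagonal hci hcj u = K := by
  -- `c` is the index of the kernel part `{y | (0, y) ∈ K}`, and `u` the residue of any `y₁` with
  -- `(1, y₁) ∈ K`.
  set c := K.goursatSnd.index
  have hcj : c ∣ j := by simpa using K.goursatSnd.index_dvd_card
  have hM : K.goursatSnd = (castHom hcj (ZMod c)).toAddMonoidHom.ker :=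
    IsAddCyclic.addSubgroup_eq_of_index_eq (index_ker_castHom hcj).symm
  have hfst : ∀ x, ∃ y, (x, y) ∈ K := fun x => by
    obtain ⟨p, hp, rfl⟩ : x ∈ K.map (AddMonoidHom.fst _ _) := hK.1 ▸ mem_top x
    exact ⟨p.2, hp⟩
  have hsnd : ∀ y, ∃ x, (x, y) ∈ K := fun y => by
    obtain ⟨p, hp, rfl⟩ : y ∈ K.map (AddMonoidHom.snd _ _) := hK.2 ▸ mem_top y
    exact ⟨p.1, hp⟩
  obtain ⟨y₁, h₁⟩ := hfst 1
  have key := castHom_snd_eq_val_mul hcj hM h₁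
  have hu : IsUnit (castHom hcj (ZMod c) y₁) := by
    obtain ⟨x, hx⟩ := hsnd 1
    exact .of_mul_eq_one_right _ (by rw [← key _ hx, map_one])
  have hci : c ∣ i := by
    have := key _ (nsmul_mem h₁ i)
    simp only [Prod.smul_mk, nsmul_eq_mul, mul_one, natCast_self, val_zero, Nat.cast_zero,
      zero_mul, map_mul, map_natCast] at this
    exact (natCast_eq_zero_iff i c).mp (hu.mul_left_eq_zero.mp this)
  refine ⟨c, hci, hcj, hu.unit, ?_⟩
  ext p
  rw [mem_twistedDiagonal, IsUnit.unit_spec, castHom_apply p.1, cast_eq_val, mul_comm]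
  refine ⟨fun hp => ?_, fun hp => (key _ hp).symm⟩
  obtain ⟨y, hy⟩ := hfst p.1
  have hdiff : ((0 : ZMod i), p.2 - y) ∈ K := by
    rw [← mem_goursatSnd, hM, AddMonoidHom.mem_ker, RingHom.toAddMonoidHom_eq_coe,
      AddMonoidHom.coe_coe, map_sub, sub_eq_zero, key _ hy, hp]
  simpa using add_mem hy hdiff

theorem natCard_units_eq_totient (c : ℕ) [NeZero c] : Nat.card (ZMod c)ˣ = c.totient := by
  rw [Nat.card_eq_fintype_card, card_units_eq_totient]

theorem card_withProjections_top_top [NeZero i] [NeZero j] :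
    Nat.card (withProjections (⊤ : AddSubgroup (ZMod i)) (⊤ : AddSubgroup (ZMod j))) =
      i.gcd j := by
  have hdvd : ∀ c : (i.gcd j).divisors, (c : ℕ) ∣ i ∧ (c : ℕ) ∣ j := fun c =>
    Nat.dvd_gcd_iff.mp (Nat.dvd_of_mem_divisors c.2)
  have (c : (i.gcd j).divisors) : NeZero (c : ℕ) := ⟨(Nat.pos_of_mem_divisors c.2).ne'⟩
  let Φ : (Σ c : (i.gcd j).divisors, (ZMod c)ˣ) → withProjections (⊤ : AddSubgroup (ZMod i)) ⊤ :=
    fun x => ⟨_, twistedDiagonal_mem_withProjections (hdvd x.1).1 (hdvd x.1).2 x.2⟩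
  have hΦ : Function.Bijective Φ := by
    refine ⟨fun ⟨⟨c, hc⟩, u⟩ ⟨⟨c', hc'⟩, u'⟩ h => ?_, fun K => ?_⟩
    · have hK : twistedDiagonal _ _ (u : ZMod c) = twistedDiagonal _ _ (u' : ZMod c') :=
        congrArg Subtype.val h
      obtain rfl : c = c' := by
        simpa only [index_goursatSnd_twistedDiagonal] using
          congrArg (fun K => K.goursatSnd.index) hK
      obtain rfl : u = u' := Units.ext (twistedDiagonal_injective _ _ hK)
      rfl
    · obtain ⟨c, hci, hcj, u, hK⟩ := exists_twistedDiagonal_eq K.2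
      have hc : c ∈ (i.gcd j).divisors :=
        Nat.mem_divisors.mpr ⟨Nat.dvd_gcd hci hcj, (Nat.gcd_pos_of_pos_left j (NeZero.pos i)).ne'⟩
      exact ⟨⟨⟨c, hc⟩, u⟩, Subtype.ext hK⟩
  rw [← Nat.card_congr (Equiv.ofBijective Φ hΦ), Nat.card_sigma]
  simp only [natCard_units_eq_totient]
  rw [Finset.sum_coe_sort _ Nat.totient, Nat.sum_totient]

end ZMod

namespace IsAddCyclic

variable {A B : Type*} [AddCommGroup A] [AddCommGroup B] [IsAddCyclic A] [IsAddCyclic B]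

theorem exponent_eq_lcm_card_map (H : AddSubgroup (A × B)) :
    AddMonoid.exponent H = (Nat.card (H.map (AddMonoidHom.fst A B))).lcm
      (Nat.card (H.map (AddMonoidHom.snd A B))) := by
  rw [exponent_eq_lcm_exponent_map, exponent_eq_card, exponent_eq_card]

variable [Finite A] [Finite B]

theorem card_withProjections (P : AddSubgroup A) (Q : AddSubgroup B) :
    Nat.card (withProjections P Q) = (Nat.card P).gcd (Nat.card Q) := by
  have : NeZero (Nat.card P) := ⟨Nat.card_pos.ne'⟩
  have : NeZero (Nat.card Q) := ⟨Nat.card_pos.ne'⟩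
  obtain ⟨f, hf, hfP⟩ := exists_zmod_injective_range_eq P
  obtain ⟨g, hg, hgQ⟩ := exists_zmod_injective_range_eq Q
  calc Nat.card (withProjections P Q) = Nat.card (withProjections f.range g.range) := by
        rw [hfP, hgQ]
    _ = Nat.card (withProjections (⊤ : AddSubgroup (ZMod (Nat.card P))) ⊤) :=
        (Nat.card_congr (withProjectionsEquivOfInjective hf hg)).symm
    _ = (Nat.card P).gcd (Nat.card Q) := ZMod.card_withProjections_top_top

theorem card_addSubgroup_exponent_eq (E : ℕ) :
    Nat.card {H : AddSubgroup (A × B) // AddMonoid.exponent H = E} =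
      ∑ i ∈ (Nat.card A).divisors, ∑ j ∈ (Nat.card B).divisors,
        if i.lcm j = E then i.gcd j else 0 := by
  classical
  have := Fintype.ofFinite (AddSubgroup A)
  have := Fintype.ofFinite (AddSubgroup B)
  have := Fintype.ofFinite (AddSubgroup (A × B))
  let π (H : AddSubgroup (A × B)) := (H.map (AddMonoidHom.fst A B), H.map (AddMonoidHom.snd A B))
  have hfiber (P : AddSubgroup A) (Q : AddSubgroup B) :
      (univ.filter fun H : AddSubgroup (A × B) => AddMonoid.exponent H = E ∧ π H = (P, Q)).card =
        if (Nat.card P).lcm (Nat.card Q) = E then Nat.card (withProjections P Q) else 0 := by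
    have hmem (H : AddSubgroup (A × B)) : π H = (P, Q) ↔ H ∈ withProjections P Q := Prod.ext_iff
    have hexp (H : AddSubgroup (A × B)) (hH : H ∈ withProjections P Q) :
        AddMonoid.exponent H = (Nat.card P).lcm (Nat.card Q) := by
      rw [exponent_eq_lcm_card_map, hH.1, hH.2]
    split_ifs with h
    · rw [Nat.card_eq_fintype_card, Fintype.card_subtype]
      refine congrArg card (filter_congr fun H _ => ?_)
      rw [hmem]
      exact ⟨fun hH => hH.2, fun hH => ⟨(hexp H hH).trans h, hH⟩⟩
    · refine card_eq_zero.mpr (filter_eq_empty_iff.mpr fun H _ hH => h ?_)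
      rw [← hH.1, hexp H ((hmem H).mp hH.2)]
  calc Nat.card {H : AddSubgroup (A × B) // AddMonoid.exponent H = E}
      = ∑ P : AddSubgroup A, ∑ Q : AddSubgroup B, (univ.filter fun H : AddSubgroup (A × B) =>
          AddMonoid.exponent H = E ∧ π H = (P, Q)).card := by
        rw [Nat.card_eq_fintype_card, Fintype.card_subtype,
          card_eq_sum_card_fiberwise (f := π) (t := univ) (fun _ _ => mem_coe.mpr (mem_univ _)),
          ← univ_product_univ, sum_product]
        simp only [filter_filter]
    _ = ∑ P : AddSubgroup A, ∑ Q : AddSubgroup B,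
          if (Nat.card P).lcm (Nat.card Q) = E then (Nat.card P).gcd (Nat.card Q) else 0 := by
        simp only [hfiber, card_withProjections]
    _ = _ := by
        rw [← sum_addSubgroup_card_eq_sum_divisors]
        refine sum_congr rfl fun P _ => ?_
        rw [← sum_addSubgroup_card_eq_sum_divisors]

end IsAddCyclic

theorem stmt_11_general (m n E : ℕ) (hm : 1 ≤ m) (hn : 1 ≤ n) :
    Nat.card {H : AddSubgroup (ZMod m × ZMod n) // AddMonoid.exponent H = E} =
      ∑ i ∈ m.divisors, ∑ j ∈ n.divisors,
        if Nat.lcm i j = E then Nat.gcd i j else 0 := by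
  have : NeZero m := ⟨by omega⟩
  have : NeZero n := ⟨by omega⟩
  simpa only [Nat.card_zmod] using
    IsAddCyclic.card_addSubgroup_exponent_eq (A := ZMod m) (B := ZMod n) E

theorem stmt_11 (m n E : ℕ) (hm : 1 ≤ m) (hn : 1 ≤ n) (hE : E ∣ Nat.lcm m n) :
    Nat.card {H : AddSubgroup (ZMod m × ZMod n) // AddMonoid.exponent H = E} =
      ∑ i ∈ m.divisors, ∑ j ∈ n.divisors,
        if Nat.lcm i j = E then Nat.gcd i j else 0 :=
  stmt_11_general m n E hm hn
end

section
/- For every m, n ≥ 1 and E dividing lcm(m,n), the number of subgroups of exponent E of Z_m × Z_n equals (1/E) · ∑ ij, the sum over divisors i of m and j of n with lcm(i,j) = E. -/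
/-!
The exponent of `H ≤ Z_m × Z_n` is the lcm of the orders `i, j` of its projections, so it
suffices to count, for each `i ∣ m` and `j ∣ n`, the subgroups whose projections are the unique
subgroups `Z_i ≤ Z_m` and `Z_j ≤ Z_n`. Up to these embeddings they are the subgroups of
`Z_i × Z_j` projecting onto both factors, which are exactly the `{(x, y) | y ≡ a x (mod d)}` with
`d ∣ gcd(i, j)` and `a` a unit mod `d`. Hence there are
`∑_{d ∣ gcd(i, j)} φ(d) = gcd(i, j) = i j / lcm(i, j)` of them.
-/

open AddMonoidHom

namespace AddSubgroup

variable {G : Type*} [AddCommGroup G] [IsAddCyclic G] [Finite G]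

theorem eq_ker_nsmul_card_s12 (K : AddSubgroup G) : K = (nsmulAddMonoidHom (Nat.card K)).ker := by
  refine eq_of_le_of_card_ge (fun x hx => ?_) ?_
  · exact congrArg Subtype.val (card_nsmul_eq_zero' (x := (⟨x, hx⟩ : K)))
  · rw [IsAddCyclic.card_nsmulAddMonoidHom_ker, Nat.gcd_eq_right (card_addSubgroup_dvd_card K)]

theorem eq_of_card_eq_of_isAddCyclic {K L : AddSubgroup G} (h : Nat.card K = Nat.card L) :
    K = L := by
  rw [eq_ker_nsmul_card_s12 K, eq_ker_nsmul_card_s12 L, h]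

end AddSubgroup

namespace ZMod

variable {i j d : ℕ}

theorem card_ker_castHom_mul [NeZero j] (hd : d ∣ j) :
    Nat.card (castHom hd (ZMod d)).toAddMonoidHom.ker * d = j := by
  have h := AddSubgroup.card_mul_index (castHom hd (ZMod d)).toAddMonoidHom.ker
  rwa [AddSubgroup.index_ker, range_eq_top.2 (castHom_surjective hd), AddSubgroup.card_top,
    Nat.card_zmod, Nat.card_zmod] at h

theorem exists_eq_ker_castHom [NeZero j] (K : AddSubgroup (ZMod j)) :
    ∃ d, ∃ hd : d ∣ j, K = (castHom hd (ZMod d)).toAddMonoidHom.ker := by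
  have hK : Nat.card K ∣ j := by simpa using K.card_addSubgroup_dvd_card
  have hd : j / Nat.card K ∣ j := Nat.div_dvd_of_dvd hK
  refine ⟨j / Nat.card K, hd, AddSubgroup.eq_of_card_eq_of_isAddCyclic ?_⟩
  have hpos : 0 < j / Nat.card K :=
    Nat.div_pos (Nat.le_of_dvd (NeZero.pos j) hK) Nat.card_pos
  refine Nat.eq_of_mul_eq_mul_right hpos ?_
  rw [card_ker_castHom_mul hd, Nat.mul_div_cancel' hK]

def modGraph (hdi : d ∣ i) (hdj : d ∣ j) (a : ZMod d) : AddSubgroup (ZMod i × ZMod j) where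
  carrier := {p | castHom hdj (ZMod d) p.2 = a * castHom hdi (ZMod d) p.1}
  add_mem' {p q} hp hq := by simp_all [mul_add]
  zero_mem' := by simp
  neg_mem' {p} hp := by simp_all

theorem mem_modGraph {hdi : d ∣ i} {hdj : d ∣ j} {a : ZMod d} {x : ZMod i} {y : ZMod j} :
    (x, y) ∈ modGraph hdi hdj a ↔ castHom hdj (ZMod d) y = a * castHom hdi (ZMod d) x :=
  Iff.rfl

theorem map_fst_modGraph (hdi : d ∣ i) (hdj : d ∣ j) (a : ZMod d) :
    (modGraph hdi hdj a).map (fst (ZMod i) (ZMod j)) = ⊤ := by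
  refine eq_top_iff.2 fun x _ => ?_
  obtain ⟨y, hy⟩ := castHom_surjective hdj (a * castHom hdi (ZMod d) x)
  exact ⟨(x, y), mem_modGraph.2 hy, rfl⟩

theorem map_snd_modGraph (hdi : d ∣ i) (hdj : d ∣ j) (a : (ZMod d)ˣ) :
    (modGraph hdi hdj a).map (snd (ZMod i) (ZMod j)) = ⊤ := by
  refine eq_top_iff.2 fun y _ => ?_
  obtain ⟨x, hx⟩ := castHom_surjective hdi (↑a⁻¹ * castHom hdj (ZMod d) y)
  exact ⟨(x, y), mem_modGraph.2 (by rw [hx, Units.mul_inv_cancel_left]), rfl⟩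

section

variable {d' : ℕ} {hdi : d ∣ i} {hdj : d ∣ j} {hdi' : d' ∣ i} {hdj' : d' ∣ j} {a : ZMod d}
  {a' : ZMod d'}

theorem dvd_of_modGraph_eq (h : modGraph hdi hdj a = modGraph hdi' hdj' a') : d' ∣ d := by
  have hmem : ((0 : ZMod i), (d : ZMod j)) ∈ modGraph hdi hdj a := by simp [mem_modGraph]
  rw [h, mem_modGraph] at hmem
  simpa [ZMod.natCast_eq_zero_iff] using hmem

theorem eq_of_modGraph_eq (h : modGraph hdi hdj a = modGraph hdi' hdj' a') : d = d' :=
  Nat.dvd_antisymm (dvd_of_modGraph_eq h.symm) (dvd_of_modGraph_eq h)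

end

theorem modGraph_injective (hdi : d ∣ i) (hdj : d ∣ j) :
    Function.Injective (modGraph hdi hdj) := by
  intro a a' h
  obtain ⟨y, hy⟩ := castHom_surjective hdj a
  have hmem : ((1 : ZMod i), y) ∈ modGraph hdi hdj a := by
    rw [mem_modGraph, map_one, mul_one, hy]
  rwa [h, mem_modGraph, map_one, mul_one, hy] at hmem

theorem exists_eq_modGraph [NeZero i] [NeZero j] {H : AddSubgroup (ZMod i × ZMod j)}
    (h₁ : H.map (fst (ZMod i) (ZMod j)) = ⊤) (h₂ : H.map (snd (ZMod i) (ZMod j)) = ⊤) :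
    ∃ d, ∃ (hdi : d ∣ i) (hdj : d ∣ j) (a : (ZMod d)ˣ), H = modGraph hdi hdj a := by
  obtain ⟨d, hdj, hK⟩ := exists_eq_ker_castHom (H.comap (inr (ZMod i) (ZMod j)))
  have mem_inr (y : ZMod j) : ((0 : ZMod i), y) ∈ H ↔ castHom hdj (ZMod d) y = 0 := by
    simpa using SetLike.ext_iff.1 hK y
  obtain ⟨⟨_, y₁⟩, hy₁, rfl⟩ := AddSubgroup.mem_map.1 (h₁ ▸ AddSubgroup.mem_top (1 : ZMod i))
  set b := castHom hdj (ZMod d) y₁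
  -- `(1, y₁)` generates `H` modulo `0 × ker (ZMod j → ZMod d)`
  have mem_iff (x : ZMod i) (y : ZMod j) :
      (x, y) ∈ H ↔ castHom hdj (ZMod d) y = b * (x.val : ZMod d) := by
    have hsplit : (x, y) = ((0 : ZMod i), y - x.val • y₁) + x.val • ((1 : ZMod i), y₁) := by
      ext <;> simp
    rw [hsplit, add_mem_cancel_right (nsmul_mem hy₁ _), mem_inr, map_sub, map_nsmul, sub_eq_zero,
      nsmul_eq_mul, mul_comm]
  obtain ⟨⟨x₂, _⟩, hx₂, rfl⟩ := AddSubgroup.mem_map.1 (h₂ ▸ AddSubgroup.mem_top (1 : ZMod j))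
  have hb : IsUnit b := IsUnit.of_mul_eq_one _ (((mem_iff _ _).1 hx₂).symm.trans (map_one _))
  have hdi : d ∣ i := by
    have hi := (mem_inr (i • y₁)).1 (by simpa using nsmul_mem hy₁ i)
    rw [map_nsmul, nsmul_eq_mul] at hi
    exact (ZMod.natCast_eq_zero_iff _ _).1 (hb.mul_left_eq_zero.1 hi)
  refine ⟨d, hdi, hdj, hb.unit, ?_⟩
  ext ⟨x, y⟩
  rw [mem_iff, mem_modGraph, IsUnit.unit_spec, ← map_natCast (castHom hdi (ZMod d)),
    ZMod.natCast_zmod_val]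

theorem card_subgroups_map_fst_snd_eq_top [NeZero i] [NeZero j] :
    Nat.card {H : AddSubgroup (ZMod i × ZMod j) //
      H.map (fst (ZMod i) (ZMod j)) = ⊤ ∧ H.map (snd (ZMod i) (ZMod j)) = ⊤} = Nat.gcd i j := by
  let param (p : Σ d : (Nat.gcd i j).divisors, (ZMod d)ˣ) :
      {H : AddSubgroup (ZMod i × ZMod j) //
        H.map (fst (ZMod i) (ZMod j)) = ⊤ ∧ H.map (snd (ZMod i) (ZMod j)) = ⊤} :=
    have hdi := (Nat.dvd_of_mem_divisors p.1.2).trans (Nat.gcd_dvd_left i j)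
    have hdj := (Nat.dvd_of_mem_divisors p.1.2).trans (Nat.gcd_dvd_right i j)
    ⟨modGraph hdi hdj p.2, map_fst_modGraph _ _ _, map_snd_modGraph _ _ _⟩
  have hparam : Function.Bijective param := by
    refine ⟨fun ⟨⟨d, hd⟩, a⟩ ⟨⟨d', hd'⟩, a'⟩ h => ?_, fun ⟨H, h₁, h₂⟩ => ?_⟩
    · have h := congrArg Subtype.val h
      obtain rfl : d = d' := eq_of_modGraph_eq h
      obtain rfl : a = a' := Units.ext (modGraph_injective _ _ h)
      rfl
    · obtain ⟨d, hdi, hdj, a, rfl⟩ := exists_eq_modGraph h₁ h₂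
      exact ⟨⟨⟨d, Nat.mem_divisors.2 ⟨Nat.dvd_gcd hdi hdj, Nat.gcd_ne_zero_left (NeZero.ne i)⟩⟩,
        a⟩, rfl⟩
  rw [← Nat.card_eq_of_bijective param hparam, Nat.card_sigma]
  calc ∑ d : (Nat.gcd i j).divisors, Nat.card (ZMod d)ˣ
      = ∑ d ∈ (Nat.gcd i j).divisors, Nat.totient d := by
        refine (Finset.sum_coe_sort _ (fun d => Nat.card (ZMod d)ˣ)).trans
          (Finset.sum_congr rfl fun d hd => ?_)
        have : NeZero d := ⟨(Nat.pos_of_mem_divisors hd).ne'⟩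
        rw [Nat.card_eq_fintype_card, ZMod.card_units_eq_totient]
    _ = Nat.gcd i j := Nat.sum_totient _

end ZMod

namespace AddSubgroup

section

variable {G₁ G₂ K₁ K₂ : Type*} [AddGroup G₁] [AddGroup G₂] [AddGroup K₁] [AddGroup K₂]

theorem exponent_eq_lcm_exponent_map_fst_snd (H : AddSubgroup (G₁ × G₂)) :
    AddMonoid.exponent H = Nat.lcm (AddMonoid.exponent (H.map (fst G₁ G₂)))
      (AddMonoid.exponent (H.map (snd G₁ G₂))) := by
  refine Nat.dvd_antisymm ?_ (Nat.lcm_dvd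
    (AddMonoidHom.exponent_dvd ((fst G₁ G₂).addSubgroupMap_surjective H))
    (AddMonoidHom.exponent_dvd ((snd G₁ G₂).addSubgroupMap_surjective H)))
  have hinj :
      Function.Injective (((fst G₁ G₂).addSubgroupMap H).prod ((snd G₁ G₂).addSubgroupMap H)) :=
    fun a b hab => Subtype.ext <| Prod.ext (congrArg (fun p => (p.1 : G₁)) hab)
      (congrArg (fun p => (p.2 : G₂)) hab)
  exact (AddMonoid.exponent_dvd_of_addMonoidHom _ hinj).trans AddMonoid.exponent_prod.dvd

theorem exponent_eq_lcm_card_map_fst_snd [IsAddCyclic G₁] [IsAddCyclic G₂]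
    (H : AddSubgroup (G₁ × G₂)) :
    AddMonoid.exponent H =
      Nat.lcm (Nat.card (H.map (fst G₁ G₂))) (Nat.card (H.map (snd G₁ G₂))) := by
  rw [exponent_eq_lcm_exponent_map_fst_snd, IsAddCyclic.exponent_eq_card,
    IsAddCyclic.exponent_eq_card]

theorem map_fst_map_prodMap (f₁ : K₁ →+ G₁) (f₂ : K₂ →+ G₂) (H : AddSubgroup (K₁ × K₂)) :
    (H.map (f₁.prodMap f₂)).map (fst G₁ G₂) = (H.map (fst K₁ K₂)).map f₁ := by
  rw [map_map, map_map]; rfl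

theorem map_snd_map_prodMap (f₁ : K₁ →+ G₁) (f₂ : K₂ →+ G₂) (H : AddSubgroup (K₁ × K₂)) :
    (H.map (f₁.prodMap f₂)).map (snd G₁ G₂) = (H.map (snd K₁ K₂)).map f₂ := by
  rw [map_map, map_map]; rfl

theorem card_subgroups_map_fst_snd_eq_range {f₁ : K₁ →+ G₁} {f₂ : K₂ →+ G₂}
    (hf₁ : Function.Injective f₁) (hf₂ : Function.Injective f₂) :
    Nat.card {H : AddSubgroup (G₁ × G₂) // H.map (fst G₁ G₂) = f₁.range ∧
        H.map (snd G₁ G₂) = f₂.range} =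
      Nat.card {H : AddSubgroup (K₁ × K₂) // H.map (fst K₁ K₂) = ⊤ ∧ H.map (snd K₁ K₂) = ⊤} := by
  set ψ := f₁.prodMap f₂
  have hψ : Function.Injective ψ := hf₁.prodMap hf₂
  have map_comap {H : AddSubgroup (G₁ × G₂)} (h₁ : H.map (fst G₁ G₂) = f₁.range)
      (h₂ : H.map (snd G₁ G₂) = f₂.range) : (H.comap ψ).map ψ = H :=
    map_comap_eq_self <| by rw [range_prodMap, le_prod_iff, h₁, h₂]; exact ⟨le_rfl, le_rfl⟩
  refine Nat.card_congr
    { toFun := fun H => ⟨H.1.comap ψ, ?comap_fst, ?comap_snd⟩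
      invFun := fun H => ⟨H.1.map ψ, ?map_fst, ?map_snd⟩
      left_inv := fun H => Subtype.ext (map_comap H.2.1 H.2.2)
      right_inv := fun H => Subtype.ext (comap_map_eq_self_of_injective hψ H.1) }
  case comap_fst =>
    refine map_injective hf₁ ?_
    rw [← map_fst_map_prodMap f₁ f₂, map_comap H.2.1 H.2.2, H.2.1, range_eq_map]
  case comap_snd =>
    refine map_injective hf₂ ?_
    rw [← map_snd_map_prodMap f₁ f₂, map_comap H.2.1 H.2.2, H.2.2, range_eq_map]
  case map_fst => rw [map_fst_map_prodMap, H.2.1, range_eq_map]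
  case map_snd => rw [map_snd_map_prodMap, H.2.2, range_eq_map]

theorem card_subgroups_map_fst_snd_eq (A : AddSubgroup G₁) (B : AddSubgroup G₂) [IsAddCyclic A]
    [IsAddCyclic B] [Finite A] [Finite B] :
    Nat.card {H : AddSubgroup (G₁ × G₂) // H.map (fst G₁ G₂) = A ∧ H.map (snd G₁ G₂) = B} =
      Nat.gcd (Nat.card A) (Nat.card B) := by
  have : NeZero (Nat.card A) := ⟨Nat.card_pos.ne'⟩
  have : NeZero (Nat.card B) := ⟨Nat.card_pos.ne'⟩
  let f₁ := A.subtype.comp (zmodAddCyclicAddEquiv (G := A) inferInstance).toAddMonoidHom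
  let f₂ := B.subtype.comp (zmodAddCyclicAddEquiv (G := B) inferInstance).toAddMonoidHom
  have hf₁ : f₁.range = A := by simp [f₁, range_comp, ← range_eq_map]
  have hf₂ : f₂.range = B := by simp [f₂, range_comp, ← range_eq_map]
  have h := card_subgroups_map_fst_snd_eq_range (f₁ := f₁) (f₂ := f₂)
    (A.subtype_injective.comp (AddEquiv.injective _))
    (B.subtype_injective.comp (AddEquiv.injective _))
  rwa [hf₁, hf₂, ZMod.card_subgroups_map_fst_snd_eq_top] at h

end

variable {G₁ G₂ : Type*} [AddCommGroup G₁] [AddCommGroup G₂] [IsAddCyclic G₁] [IsAddCyclic G₂]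
  [Finite G₁] [Finite G₂]

theorem card_subgroups_card_map_fst_snd_eq {i j : ℕ} (hi : i ∣ Nat.card G₁)
    (hj : j ∣ Nat.card G₂) :
    Nat.card {H : AddSubgroup (G₁ × G₂) //
      Nat.card (H.map (fst G₁ G₂)) = i ∧ Nat.card (H.map (snd G₁ G₂)) = j} = Nat.gcd i j := by
  set A := (nsmulAddMonoidHom (α := G₁) i).ker
  set B := (nsmulAddMonoidHom (α := G₂) j).ker
  have hA : Nat.card A = i := by
    rw [IsAddCyclic.card_nsmulAddMonoidHom_ker, Nat.gcd_eq_right hi]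
  have hB : Nat.card B = j := by
    rw [IsAddCyclic.card_nsmulAddMonoidHom_ker, Nat.gcd_eq_right hj]
  rw [← hA, ← hB, ← card_subgroups_map_fst_snd_eq A B]
  refine Nat.card_congr (Equiv.subtypeEquivRight fun H => ?_)
  refine ⟨fun h => ⟨eq_of_card_eq_of_isAddCyclic h.1, eq_of_card_eq_of_isAddCyclic h.2⟩,
    fun h => ⟨by rw [h.1], by rw [h.2]⟩⟩

theorem card_subgroups_exponent_eq (E : ℕ) :
    Nat.card {H : AddSubgroup (G₁ × G₂) // AddMonoid.exponent H = E} =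
      ∑ p ∈ ((Nat.card G₁).divisors ×ˢ (Nat.card G₂).divisors).filter
        (fun p => Nat.lcm p.1 p.2 = E), Nat.gcd p.1 p.2 := by
  have : Fintype (AddSubgroup (G₁ × G₂)) := Fintype.ofFinite _
  let cards (H : AddSubgroup (G₁ × G₂)) : ℕ × ℕ :=
    (Nat.card (H.map (fst G₁ G₂)), Nat.card (H.map (snd G₁ G₂)))
  have hcards (H : AddSubgroup (G₁ × G₂)) (hH : AddMonoid.exponent H = E) :
      cards H ∈ ((Nat.card G₁).divisors ×ˢ (Nat.card G₂).divisors).filter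
        (fun p => Nat.lcm p.1 p.2 = E) := by
    simp only [Finset.mem_filter, Finset.mem_product, Nat.mem_divisors, cards,
      ← exponent_eq_lcm_card_map_fst_snd]
    exact ⟨⟨⟨card_addSubgroup_dvd_card _, Nat.card_pos.ne'⟩,
      ⟨card_addSubgroup_dvd_card _, Nat.card_pos.ne'⟩⟩, hH⟩
  rw [Nat.card_eq_fintype_card, Fintype.card_subtype, Finset.card_eq_sum_card_fiberwise
    (f := cards) fun H hH => hcards H (Finset.mem_filter.1 hH).2]
  refine Finset.sum_congr rfl fun p hp => ?_
  simp only [Finset.mem_filter, Finset.mem_product] at hp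
  rw [← card_subgroups_card_map_fst_snd_eq (Nat.dvd_of_mem_divisors hp.1.1)
    (Nat.dvd_of_mem_divisors hp.1.2), Nat.card_eq_fintype_card, Fintype.card_subtype]
  congr 1
  ext H
  simp only [Finset.mem_filter, Finset.mem_univ, true_and, cards, Prod.ext_iff,
    exponent_eq_lcm_card_map_fst_snd]
  constructor
  · exact And.right
  · rintro ⟨h₁, h₂⟩
    exact ⟨by rw [h₁, h₂, hp.2], h₁, h₂⟩

end AddSubgroup

theorem Nat.sum_divisors_ite_lcm_div_eq (m n E : ℕ) :
    (∑ i ∈ m.divisors, ∑ j ∈ n.divisors, if Nat.lcm i j = E then i * j else 0) / E =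
      ∑ p ∈ (m.divisors ×ˢ n.divisors).filter (fun p => Nat.lcm p.1 p.2 = E),
        Nat.gcd p.1 p.2 := by
  rcases eq_or_ne E 0 with rfl | hE
  · refine (Nat.div_zero _).trans (Finset.sum_eq_zero fun p hp => ?_).symm
    simp only [Finset.mem_filter, Finset.mem_product, Nat.lcm_eq_zero_iff] at hp
    have := Nat.pos_of_mem_divisors hp.1.1
    have := Nat.pos_of_mem_divisors hp.1.2
    omega
  refine Nat.div_eq_of_eq_mul_right (Nat.pos_of_ne_zero hE) ?_
  rw [Finset.sum_filter, Finset.sum_product, Finset.mul_sum]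
  refine Finset.sum_congr rfl fun i _ => ?_
  rw [Finset.mul_sum]
  refine Finset.sum_congr rfl fun j _ => ?_
  split_ifs with h
  · rw [← h]
    exact (Nat.gcd_mul_lcm i j).symm.trans (mul_comm _ _)
  · rfl

theorem stmt_12_general (m n E : ℕ) (hm : 1 ≤ m) (hn : 1 ≤ n) :
    Nat.card {H : AddSubgroup (ZMod m × ZMod n) // AddMonoid.exponent H = E} =
      (∑ i ∈ m.divisors, ∑ j ∈ n.divisors,
        if Nat.lcm i j = E then i * j else 0) / E := by
  have : NeZero m := ⟨by omega⟩
  have : NeZero n := ⟨by omega⟩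
  rw [Nat.sum_divisors_ite_lcm_div_eq, AddSubgroup.card_subgroups_exponent_eq, Nat.card_zmod,
    Nat.card_zmod]

theorem stmt_12 (m n E : ℕ) (hm : 1 ≤ m) (hn : 1 ≤ n) (hE : E ∣ Nat.lcm m n) :
    Nat.card {H : AddSubgroup (ZMod m × ZMod n) // AddMonoid.exponent H = E} =
      (∑ i ∈ m.divisors, ∑ j ∈ n.divisors,
        if Nat.lcm i j = E then i * j else 0) / E :=
  stmt_12_general m n E hm hn
end

section
/- For every n ≥ 1 and E dividing n, the number of subgroups of exponent E of Z_n × Z_n equals ∑ gcd(i,j), the sum over divisors i, j of E with gcd(E/i, E/j) = 1. -/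
/-!
A subgroup `H` of `ZMod n × ZMod n` is pinned down by the orders `i`, `j` of its two
projections, the index `k` of `H ∩ (0 × ZMod n)` in the second projection, and a residue `u`
modulo `k`: writing `g d` for the element `n / d` of order `d`, the subgroup is generated by
`(g i, u • g j)` and `(0, k • g j)`. The admissible parameters are `k ∣ gcd i j` and `u` a
unit modulo `k`, so exactly `∑_{k ∣ gcd i j} φ k = gcd i j` subgroups have projections of
orders `i` and `j`. The exponent of such a subgroup is `lcm i j`, and for `i, j ∣ E` we have
`lcm i j = E` iff `gcd (E / i) (E / j) = 1`.
-/

open AddSubgroup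

theorem Nat.gcd_div_eq_div_lcm {E i j : ℕ} (hi : i ∣ E) (hj : j ∣ E) :
    (E / i).gcd (E / j) = E / i.lcm j := by
  refine Nat.dvd_left_iff_eq.mp fun d => ?_
  rw [Nat.dvd_gcd_iff, Nat.dvd_div_iff_mul_dvd hi, Nat.dvd_div_iff_mul_dvd hj,
    Nat.dvd_div_iff_mul_dvd (Nat.lcm_dvd hi hj), ← Nat.lcm_dvd_iff, Nat.mul_comm i,
    Nat.mul_comm j, Nat.lcm_mul_left, Nat.mul_comm]

theorem Nat.lcm_eq_iff_gcd_div_eq_one {E i j : ℕ} (hE : E ≠ 0) (hi : i ∣ E) (hj : j ∣ E) :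
    i.lcm j = E ↔ (E / i).gcd (E / j) = 1 := by
  have hdvd : i.lcm j ∣ E := Nat.lcm_dvd hi hj
  rw [Nat.gcd_div_eq_div_lcm hi hj,
    Nat.div_eq_iff_eq_mul_left (Nat.pos_of_dvd_of_pos hdvd (Nat.pos_of_ne_zero hE)) hdvd,
    one_mul, eq_comm]

theorem IsAddCyclic.addSubgroup_eq_of_card_eq_s13 {G : Type*} [AddCommGroup G] [IsAddCyclic G]
    [Finite G] {H K : AddSubgroup G} (h : Nat.card H = Nat.card K) : H = K := by
  -- a subgroup of order `d` lies in the `d`-torsion, which has exactly `d` elements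
  have eq_ker (S : AddSubgroup G) : S = (nsmulAddMonoidHom (Nat.card S) : G →+ G).ker := by
    refine eq_of_le_of_card_ge (fun x hx => ?_) ?_
    · exact congrArg Subtype.val (card_nsmul_eq_zero' (x := (⟨x, hx⟩ : S)))
    · rw [IsAddCyclic.card_nsmulAddMonoidHom_ker, Nat.gcd_eq_right S.card_addSubgroup_dvd_card]
  rw [eq_ker H, eq_ker K, h]

theorem AddSubgroup.exponent_eq_lcm_map_fst_map_snd {A B : Type*} [AddGroup A] [AddGroup B]
    (H : AddSubgroup (A × B)) :
    AddMonoid.exponent H = (AddMonoid.exponent (H.map (AddMonoidHom.fst A B))).lcm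
      (AddMonoid.exponent (H.map (AddMonoidHom.snd A B))) := by
  let π₁ := (AddMonoidHom.fst A B).addSubgroupMap H
  let π₂ := (AddMonoidHom.snd A B).addSubgroupMap H
  have hinj : Function.Injective (π₁.prod π₂) := fun x y hxy =>
    Subtype.ext (Prod.ext (congrArg (fun p => (p.1 : A)) hxy) (congrArg (fun p => (p.2 : B)) hxy))
  refine Nat.dvd_antisymm ?_ (Nat.lcm_dvd ?_ ?_)
  · exact (AddMonoid.exponent_dvd_of_addMonoidHom _ hinj).trans AddMonoid.exponent_prod.dvd
  · exact AddMonoidHom.exponent_dvd ((AddMonoidHom.fst A B).addSubgroupMap_surjective H)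
  · exact AddMonoidHom.exponent_dvd ((AddMonoidHom.snd A B).addSubgroupMap_surjective H)

theorem zsmul_mem_zmultiples_nsmul_iff {G : Type*} [AddGroup G] {g : G} {k : ℕ}
    (hk : k ∣ addOrderOf g) (m : ℤ) : m • g ∈ zmultiples (k • g) ↔ (k : ℤ) ∣ m := by
  simp only [mem_zmultiples_iff, ← natCast_zsmul, smul_smul]
  constructor
  · rintro ⟨t, ht⟩
    rw [zsmul_eq_zsmul_iff_modEq, Int.modEq_iff_dvd] at ht
    exact (dvd_sub_left (dvd_mul_left _ _)).mp ((Int.natCast_dvd_natCast.mpr hk).trans ht)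
  · rintro ⟨c, rfl⟩
    exact ⟨c, by rw [mul_comm]⟩

theorem mem_closure_pair_nsmul_iff {G : Type*} [AddCommGroup G] {g : G} {k : ℕ}
    (hk : k ∣ addOrderOf g) (u : ℕ) : g ∈ closure {u • g, k • g} ↔ u.Coprime k := by
  rw [mem_closure_pair, ← Nat.isCoprime_iff_coprime]
  simp only [← natCast_zsmul, smul_smul, ← add_smul]
  constructor
  · rintro ⟨s, t, hst⟩
    rw [← one_zsmul g, smul_smul, mul_one, zsmul_eq_zsmul_iff_modEq, Int.modEq_iff_dvd] at hst
    obtain ⟨c, hc⟩ := (Int.natCast_dvd_natCast.mpr hk).trans hst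
    exact ⟨s, t + c, by linear_combination -hc⟩
  · rintro ⟨s, t, hst⟩
    exact ⟨s, t, by rw [hst, one_zsmul]⟩

namespace ZMod

def ofOrder (n d : ℕ) : ZMod n := ((n / d : ℕ) : ZMod n)

def normalForm (n i j k u : ℕ) : AddSubgroup (ZMod n × ZMod n) :=
  closure {(ofOrder n i, u • ofOrder n j), (0, k • ofOrder n j)}

def normalFormParams (i j : ℕ) : Finset (Σ _ : ℕ, ℕ) :=
  (i.gcd j).divisors.sigma fun k => {u ∈ Finset.range k | k.Coprime u}

theorem card_normalFormParams (i j : ℕ) : (normalFormParams i j).card = i.gcd j :=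
  (Finset.card_sigma _ _).trans (Nat.sum_totient _)

variable {n i j k u : ℕ}

theorem mem_normalFormParams (hi : i ≠ 0) {p : Σ _ : ℕ, ℕ} :
    p ∈ normalFormParams i j ↔ p.1 ∣ i ∧ p.1 ∣ j ∧ p.2 < p.1 ∧ p.2.Coprime p.1 := by
  simp [normalFormParams, Nat.dvd_gcd_iff, hi, Nat.coprime_comm, and_assoc]

theorem mem_normalForm {z : ZMod n × ZMod n} :
    z ∈ normalForm n i j k u ↔
      ∃ s t : ℤ, (s • ofOrder n i, (s * u + t * k) • ofOrder n j) = z := by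
  simp only [normalForm, mem_closure_pair, Prod.smul_mk, Prod.mk_add_mk, smul_zero, add_zero,
    add_smul, mul_smul, natCast_zsmul]

theorem map_fst_normalForm :
    (normalForm n i j k u).map (AddMonoidHom.fst _ _) = zmultiples (ofOrder n i) := by
  rw [normalForm, AddMonoidHom.map_closure, Set.image_pair, Set.pair_comm]
  exact (closure_insert_zero _).trans (zmultiples_eq_closure _).symm

theorem map_snd_normalForm :
    (normalForm n i j k u).map (AddMonoidHom.snd _ _) =
      AddSubgroup.closure {u • ofOrder n j, k • ofOrder n j} := by
  rw [normalForm, AddMonoidHom.map_closure, Set.image_pair]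
  rfl

theorem normalForm_eq_of_mem {H : AddSubgroup (ZMod n × ZMod n)}
    (hfst : H.map (AddMonoidHom.fst _ _) = zmultiples (ofOrder n i))
    (hinr : H.comap (AddMonoidHom.inr _ _) = zmultiples (k • ofOrder n j))
    (hmem : (ofOrder n i, u • ofOrder n j) ∈ H) : normalForm n i j k u = H := by
  have hker : ∀ y, ((0 : ZMod n), y) ∈ H ↔ y ∈ zmultiples (k • ofOrder n j) := fun y => by
    rw [← hinr]; rfl
  refine le_antisymm ((closure_le _).mpr ?_) fun z hz => ?_
  · exact Set.insert_subset_iff.mpr ⟨hmem, Set.singleton_subset_iff.mpr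
      ((hker _).mpr (mem_zmultiples _))⟩
  · obtain ⟨s, hs⟩ := mem_zmultiples_iff.mp (hfst ▸ mem_map_of_mem _ hz)
    have hrest : ((0 : ZMod n), z.2 - s • u • ofOrder n j) ∈ H := by
      convert sub_mem hz (zsmul_mem hmem s) using 1
      exact Prod.ext (sub_eq_zero.mpr hs.symm).symm rfl
    obtain ⟨t, ht⟩ := mem_zmultiples_iff.mp ((hker _).mp hrest)
    refine mem_closure_pair.mpr ⟨s, t, Prod.ext ?_ ?_⟩
    · exact (congrArg (_ + ·) (smul_zero t)).trans ((add_zero _).trans hs)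
    · exact (congrArg (_ + ·) ht).trans (add_sub_cancel _ _)

theorem exponent_eq_lcm_card_map (H : AddSubgroup (ZMod n × ZMod n)) :
    AddMonoid.exponent H = (Nat.card (H.map (AddMonoidHom.fst _ _))).lcm
      (Nat.card (H.map (AddMonoidHom.snd _ _))) := by
  rw [exponent_eq_lcm_map_fst_map_snd, IsAddCyclic.exponent_eq_card, IsAddCyclic.exponent_eq_card]

section NeZero

variable [NeZero n]

theorem addOrderOf_ofOrder {d : ℕ} (hd : d ∣ n) : addOrderOf (ofOrder n d) = d := by
  rw [ofOrder, ZMod.addOrderOf_coe _ (NeZero.ne n), Nat.gcd_eq_right (Nat.div_dvd_of_dvd hd),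
    Nat.div_div_self hd (NeZero.ne n)]

theorem card_zmultiples_nsmul_ofOrder {j k : ℕ} (hkj : k ∣ j) (hj : j ∣ n) :
    Nat.card (zmultiples (k • ofOrder n j)) = j / k := by
  rw [Nat.card_zmultiples, addOrderOf_nsmul, addOrderOf_ofOrder hj, Nat.gcd_eq_right hkj]

theorem card_addSubgroup_dvd (S : AddSubgroup (ZMod n)) : Nat.card S ∣ n := by
  simpa using S.card_addSubgroup_dvd_card

theorem eq_zmultiples_ofOrder (S : AddSubgroup (ZMod n)) :
    S = zmultiples (ofOrder n (Nat.card S)) := by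
  refine IsAddCyclic.addSubgroup_eq_of_card_eq_s13 ?_
  rw [Nat.card_zmultiples, addOrderOf_ofOrder (card_addSubgroup_dvd S)]

theorem map_snd_normalForm_eq_zmultiples_iff (hj : j ∣ n) (hkj : k ∣ j) :
    (normalForm n i j k u).map (AddMonoidHom.snd _ _) = zmultiples (ofOrder n j) ↔
      u.Coprime k := by
  have hk : k ∣ addOrderOf (ofOrder n j) := (addOrderOf_ofOrder hj).symm ▸ hkj
  rw [map_snd_normalForm, ← mem_closure_pair_nsmul_iff hk]
  refine ⟨fun h => h ▸ mem_zmultiples _, fun hg => le_antisymm ?_ (zmultiples_le.mpr hg)⟩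
  exact (closure_le _).mpr (Set.insert_subset_iff.mpr ⟨nsmul_mem (mem_zmultiples _) _,
    Set.singleton_subset_iff.mpr (nsmul_mem (mem_zmultiples _) _)⟩)

theorem mk_zero_mem_normalForm_iff (hi : i ∣ n) (hj : j ∣ n) (hki : k ∣ i) (hkj : k ∣ j)
    {y : ZMod n} :
    ((0 : ZMod n), y) ∈ normalForm n i j k u ↔ y ∈ zmultiples (k • ofOrder n j) := by
  have hk : k ∣ addOrderOf (ofOrder n j) := (addOrderOf_ofOrder hj).symm ▸ hkj
  rw [mem_normalForm]
  constructor
  · rintro ⟨s, t, hst⟩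
    simp only [Prod.mk.injEq] at hst
    have his : (i : ℤ) ∣ s :=
      addOrderOf_ofOrder hi ▸ addOrderOf_dvd_iff_zsmul_eq_zero.mpr hst.1
    rw [← hst.2, zsmul_mem_zmultiples_nsmul_iff hk]
    exact dvd_add (((Int.natCast_dvd_natCast.mpr hki).trans his).mul_right _) (dvd_mul_left _ _)
  · rintro ⟨t, rfl⟩
    exact ⟨0, t, by simp [mul_smul]⟩

theorem comap_inr_normalForm (hi : i ∣ n) (hj : j ∣ n) (hki : k ∣ i) (hkj : k ∣ j) :
    (normalForm n i j k u).comap (AddMonoidHom.inr _ _) = zmultiples (k • ofOrder n j) :=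
  ext fun _ => mk_zero_mem_normalForm_iff hi hj hki hkj

theorem mk_ofOrder_mem_normalForm_iff (hi : i ∣ n) (hj : j ∣ n) (hki : k ∣ i) (hkj : k ∣ j)
    {y : ZMod n} : (ofOrder n i, y) ∈ normalForm n i j k u ↔
      y - u • ofOrder n j ∈ zmultiples (k • ofOrder n j) := by
  have hgen : (ofOrder n i, u • ofOrder n j) ∈ normalForm n i j k u :=
    subset_closure (Set.mem_insert _ _)
  rw [← mk_zero_mem_normalForm_iff (u := u) hi hj hki hkj,
    ← add_mem_cancel_right hgen (y := (0, _)), Prod.mk_add_mk, zero_add, sub_add_cancel]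

theorem normalForm_injOn (hi : i ∣ n) (hj : j ∣ n) :
    Set.InjOn (fun p : Σ _ : ℕ, ℕ => normalForm n i j p.1 p.2) (normalFormParams i j) := by
  have hi0 : i ≠ 0 := ne_zero_of_dvd_ne_zero (NeZero.ne n) hi
  have hj0 : j ≠ 0 := ne_zero_of_dvd_ne_zero (NeZero.ne n) hj
  rintro ⟨k, u⟩ hp ⟨k', u'⟩ hp' h
  obtain ⟨hki, hkj, hu, -⟩ := (mem_normalFormParams hi0).mp hp
  obtain ⟨hki', hkj', hu', -⟩ := (mem_normalFormParams hi0).mp hp'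
  dsimp only at h hki hkj hu hki' hkj' hu'
  obtain rfl : k = k' := by
    have hcard := congrArg (fun H => Nat.card (H.comap (AddMonoidHom.inr (ZMod n) (ZMod n)))) h
    simp only [comap_inr_normalForm hi hj hki hkj, comap_inr_normalForm hi hj hki' hkj',
      card_zmultiples_nsmul_ofOrder hkj hj, card_zmultiples_nsmul_ofOrder hkj' hj] at hcard
    rw [← Nat.div_div_self hkj hj0, hcard, Nat.div_div_self hkj' hj0]
  have hmem : (ofOrder n i, u' • ofOrder n j) ∈ normalForm n i j k u :=
    h ▸ subset_closure (Set.mem_insert _ _)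
  rw [mk_ofOrder_mem_normalForm_iff hi hj hki hkj, ← natCast_zsmul _ u', ← natCast_zsmul _ u,
    ← sub_smul, zsmul_mem_zmultiples_nsmul_iff ((addOrderOf_ofOrder hj).symm ▸ hkj)] at hmem
  rw [Nat.ModEq.eq_of_lt_of_lt (Nat.modEq_iff_dvd.mpr hmem) hu hu']

theorem dvd_of_comap_inr_normalForm (hi : i ∣ n) (hj : j ∣ n) (hkj : k ∣ j) (hu : u.Coprime k)
    (h : (normalForm n i j k u).comap (AddMonoidHom.inr _ _) = zmultiples (k • ofOrder n j)) :
    k ∣ i := by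
  have hgen : (ofOrder n i, u • ofOrder n j) ∈ normalForm n i j k u :=
    subset_closure (Set.mem_insert _ _)
  have hiu : (i * u) • ofOrder n j ∈ zmultiples (k • ofOrder n j) := by
    rw [← h, mem_comap]
    convert nsmul_mem hgen i using 1
    refine Prod.ext ?_ (mul_comm i u ▸ mul_nsmul _ _ _)
    exact (addOrderOf_dvd_iff_nsmul_eq_zero.mp (addOrderOf_ofOrder hi).dvd).symm
  rw [← natCast_zsmul _ (i * u),
    zsmul_mem_zmultiples_nsmul_iff ((addOrderOf_ofOrder hj).symm ▸ hkj)] at hiu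
  exact hu.symm.dvd_of_dvd_mul_right (Int.natCast_dvd_natCast.mp hiu)

theorem exists_comap_inr_eq {H : AddSubgroup (ZMod n × ZMod n)}
    (hj : Nat.card (H.map (AddMonoidHom.snd _ _)) = j) :
    ∃ k, k ∣ j ∧ H.comap (AddMonoidHom.inr _ _) = zmultiples (k • ofOrder n j) := by
  have hjn : j ∣ n := hj ▸ card_addSubgroup_dvd _
  set m := Nat.card (H.comap (AddMonoidHom.inr (ZMod n) (ZMod n)))
  have hmj : m ∣ j := hj ▸ card_dvd_of_le fun y hy => ⟨(0, y), hy, rfl⟩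
  refine ⟨j / m, Nat.div_dvd_of_dvd hmj, IsAddCyclic.addSubgroup_eq_of_card_eq_s13 ?_⟩
  rw [card_zmultiples_nsmul_ofOrder (Nat.div_dvd_of_dvd hmj) hjn,
    Nat.div_div_self hmj (ne_zero_of_dvd_ne_zero (NeZero.ne n) hjn)]

theorem exists_mk_ofOrder_nsmul_mem {H : AddSubgroup (ZMod n × ZMod n)}
    (hfst : H.map (AddMonoidHom.fst _ _) = zmultiples (ofOrder n i))
    (hsnd : H.map (AddMonoidHom.snd _ _) = zmultiples (ofOrder n j))
    (hinr : H.comap (AddMonoidHom.inr _ _) = zmultiples (k • ofOrder n j)) (hk : 0 < k) :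
    ∃ u < k, (ofOrder n i, u • ofOrder n j) ∈ H := by
  obtain ⟨⟨x, y⟩, hxy, rfl⟩ := mem_map.mp (hfst ▸ mem_zmultiples (ofOrder n i))
  obtain ⟨w, rfl⟩ : y ∈ AddSubmonoid.multiples (ofOrder n j) :=
    mem_multiples_iff_mem_zmultiples.mpr (hsnd ▸ mem_map_of_mem _ hxy)
  have hq : (k * (w / k)) • ofOrder n j ∈ H.comap (AddMonoidHom.inr _ _) := by
    rw [hinr, mul_nsmul]
    exact nsmul_mem (mem_zmultiples _) _
  refine ⟨w % k, Nat.mod_lt w hk, ?_⟩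
  convert sub_mem hxy (mem_comap.mp hq) using 1
  refine Prod.ext (sub_zero _).symm (eq_sub_of_add_eq ?_)
  show (w % k) • ofOrder n j + (k * (w / k)) • ofOrder n j = w • ofOrder n j
  rw [← add_nsmul, Nat.mod_add_div]

theorem exists_normalForm_eq {H : AddSubgroup (ZMod n × ZMod n)}
    (hi : Nat.card (H.map (AddMonoidHom.fst _ _)) = i)
    (hj : Nat.card (H.map (AddMonoidHom.snd _ _)) = j) :
    ∃ p ∈ normalFormParams i j, normalForm n i j p.1 p.2 = H := by
  have hin : i ∣ n := hi ▸ card_addSubgroup_dvd _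
  have hjn : j ∣ n := hj ▸ card_addSubgroup_dvd _
  have hfst : H.map (AddMonoidHom.fst _ _) = zmultiples (ofOrder n i) :=
    hi ▸ eq_zmultiples_ofOrder _
  have hsnd : H.map (AddMonoidHom.snd _ _) = zmultiples (ofOrder n j) :=
    hj ▸ eq_zmultiples_ofOrder _
  obtain ⟨k, hkj, hinr⟩ := exists_comap_inr_eq hj
  have hk : 0 < k := Nat.pos_of_dvd_of_pos hkj (Nat.pos_of_dvd_of_pos hjn (NeZero.pos n))
  obtain ⟨u, hu, hmem⟩ := exists_mk_ofOrder_nsmul_mem hfst hsnd hinr hk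
  have hN : normalForm n i j k u = H := normalForm_eq_of_mem hfst hinr hmem
  rw [← hN] at hsnd hinr
  have hcop : u.Coprime k := (map_snd_normalForm_eq_zmultiples_iff hjn hkj).mp hsnd
  refine ⟨⟨k, u⟩, (mem_normalFormParams (ne_zero_of_dvd_ne_zero (NeZero.ne n) hin)).mpr
    ⟨dvd_of_comap_inr_normalForm hin hjn hkj hcop hinr, hkj, hu, hcop⟩, hN⟩

theorem card_addSubgroup_card_map_eq (hi : i ∣ n) (hj : j ∣ n) :
    Nat.card {H : AddSubgroup (ZMod n × ZMod n) //
      Nat.card (H.map (AddMonoidHom.fst _ _)) = i ∧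
        Nat.card (H.map (AddMonoidHom.snd _ _)) = j} = i.gcd j := by
  have hbij : Set.BijOn (fun p : Σ _ : ℕ, ℕ => normalForm n i j p.1 p.2) (normalFormParams i j)
      {H | Nat.card (H.map (AddMonoidHom.fst _ _)) = i ∧
        Nat.card (H.map (AddMonoidHom.snd _ _)) = j} := by
    refine ⟨fun p hp => ?_, normalForm_injOn hi hj, fun H hH => exists_normalForm_eq hH.1 hH.2⟩
    obtain ⟨-, hkj, -, hcop⟩ :=
      (mem_normalFormParams (ne_zero_of_dvd_ne_zero (NeZero.ne n) hi)).mp hp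
    exact ⟨by rw [map_fst_normalForm, Nat.card_zmultiples, addOrderOf_ofOrder hi],
      by rw [(map_snd_normalForm_eq_zmultiples_iff hj hkj).mpr hcop, Nat.card_zmultiples,
        addOrderOf_ofOrder hj]⟩
  rw [← card_normalFormParams, ← Set.ncard_coe_finset, hbij.ncard_eq]
  exact Nat.card_coe_set_eq _

theorem card_addSubgroup_exponent_eq_sum {E : ℕ} (hE : E ≠ 0) :
    Nat.card {H : AddSubgroup (ZMod n × ZMod n) // AddMonoid.exponent H = E} =
      ∑ i ∈ E.divisors, ∑ j ∈ E.divisors,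
        if i.lcm j = E then
          Nat.card {H : AddSubgroup (ZMod n × ZMod n) //
            Nat.card (H.map (AddMonoidHom.fst _ _)) = i ∧
              Nat.card (H.map (AddMonoidHom.snd _ _)) = j}
        else 0 := by
  classical
  let cards (H : AddSubgroup (ZMod n × ZMod n)) : ℕ × ℕ :=
    (Nat.card (H.map (AddMonoidHom.fst _ _)), Nat.card (H.map (AddMonoidHom.snd _ _)))
  have hmaps (H : AddSubgroup (ZMod n × ZMod n)) (hH : AddMonoid.exponent H = E) :
      cards H ∈ {p ∈ E.divisors ×ˢ E.divisors | p.1.lcm p.2 = E} := by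
    have hlcm : (cards H).1.lcm (cards H).2 = E := (exponent_eq_lcm_card_map H).symm.trans hH
    simp only [Finset.mem_filter, Finset.mem_product, Nat.mem_divisors]
    exact ⟨⟨⟨hlcm ▸ Nat.dvd_lcm_left _ _, hE⟩, hlcm ▸ Nat.dvd_lcm_right _ _, hE⟩,
      hlcm⟩
  rw [Nat.card_eq_fintype_card, Fintype.card_subtype, Finset.card_eq_sum_card_fiberwise
    fun H hH => hmaps H (Finset.mem_filter.mp hH).2, Finset.sum_filter, Finset.sum_product]
  refine Finset.sum_congr rfl fun i _ => Finset.sum_congr rfl fun j _ => ?_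
  split_ifs with h
  · rw [Nat.card_eq_fintype_card, Fintype.card_subtype, Finset.filter_filter]
    refine congrArg _ (Finset.filter_congr fun H _ => ?_)
    rw [exponent_eq_lcm_card_map, Prod.ext_iff]
    exact ⟨fun hH => hH.2, fun hH => ⟨hH.1 ▸ hH.2 ▸ h, hH⟩⟩
  · rfl

end NeZero

end ZMod

theorem stmt_13 (n E : ℕ) (hn : 1 ≤ n) (hE : E ∣ n) :
    Nat.card {H : AddSubgroup (ZMod n × ZMod n) // AddMonoid.exponent H = E} =
      ∑ i ∈ E.divisors, ∑ j ∈ E.divisors,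
        if Nat.gcd (E / i) (E / j) = 1 then Nat.gcd i j else 0 := by
  have : NeZero n := ⟨by omega⟩
  have hE0 : E ≠ 0 := ne_zero_of_dvd_ne_zero (NeZero.ne n) hE
  rw [ZMod.card_addSubgroup_exponent_eq_sum hE0]
  refine Finset.sum_congr rfl fun i hi => Finset.sum_congr rfl fun j hj => ?_
  have hiE := Nat.dvd_of_mem_divisors hi
  have hjE := Nat.dvd_of_mem_divisors hj
  rw [ZMod.card_addSubgroup_card_map_eq (hiE.trans hE) (hjE.trans hE)]
  exact if_congr (Nat.lcm_eq_iff_gcd_div_eq_one hE0 hiE hjE) rfl rfl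
end

section
/- For every n ≥ 1 and E dividing n, the number of subgroups of exponent E of Z_n × Z_n equals the number of cyclic subgroups of Z_E × Z_E. -/
/-!
Every element of `ZMod n × ZMod n` killed by `E` lies in the image of the embedding
`x ↦ (n / E) • x` of `ZMod E × ZMod E`, so subgroups of exponent `E` of the two groups correspond.
On `G = ZMod E × ZMod E` the pairing `(v, w) ↦ v.1 * w.2 - v.2 * w.1` is perfect (homomorphisms
`G ⧸ H → ZMod E` separate points), so `H ↦ H^⊥` is an involution on subgroups of `G`.
If `H` contains an element `g` of order `E`, then `H^⊥ ≤ g^⊥ = ⟨g⟩` is cyclic. Conversely, if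
`K^⊥` has exponent `d`, then `K = K^⊥⊥` contains `d • G ≅ (ZMod (E / d))²`, which is cyclic only
when `d = E`.
-/

open Function

namespace ZMod

variable {m n : ℕ}

def embedOfDvd (h : m ∣ n) : ZMod m →+ ZMod n :=
  lift m ⟨zmultiplesHom (ZMod n) ((n / m : ℕ) : ZMod n), by
    simp [← Nat.cast_mul, Nat.mul_div_cancel' h]⟩

lemma embedOfDvd_natCast (h : m ∣ n) (k : ℕ) :
    embedOfDvd h k = ((n / m * k : ℕ) : ZMod n) := by
  rw [← Int.cast_natCast, embedOfDvd, lift_coe]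
  simp [mul_comm]

lemma embedOfDvd_apply [NeZero m] (h : m ∣ n) (x : ZMod m) :
    embedOfDvd h x = (n / m) • (x.val : ZMod n) := by
  rw [← natCast_zmod_val x, embedOfDvd_natCast, val_natCast_of_lt (val_lt x), Nat.cast_mul,
    nsmul_eq_mul]

lemma embedOfDvd_injective [NeZero n] (h : m ∣ n) : Injective (embedOfDvd h) := by
  have : NeZero m := .of_pos (Nat.pos_of_dvd_of_pos h (NeZero.pos n))
  have hq : 0 < n / m := Nat.div_pos (Nat.le_of_dvd (NeZero.pos n) h) (NeZero.pos m)
  rw [injective_iff_map_eq_zero]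
  intro x hx
  rw [← natCast_zmod_val x, embedOfDvd_natCast, natCast_eq_zero_iff] at hx
  have hdvd : m ∣ x.val := by
    rw [← Nat.mul_dvd_mul_iff_left hq, Nat.div_mul_cancel h]
    simpa [mul_comm] using hx
  rw [← natCast_zmod_val x, (natCast_eq_zero_iff _ _).mpr hdvd]

lemma mem_range_embedOfDvd [NeZero n] (h : m ∣ n) {y : ZMod n} :
    y ∈ (embedOfDvd h).range ↔ m • y = 0 := by
  have : NeZero m := .of_pos (Nat.pos_of_dvd_of_pos h (NeZero.pos n))
  constructor
  · rintro ⟨x, rfl⟩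
    rw [← map_nsmul, nsmul_eq_mul, natCast_self, zero_mul, map_zero]
  · intro hy
    rw [← natCast_zmod_val y, nsmul_eq_mul, ← Nat.cast_mul, natCast_eq_zero_iff] at hy
    obtain ⟨c, hc⟩ := hy
    refine ⟨c, ?_⟩
    rw [embedOfDvd_natCast, ← natCast_zmod_val y]
    congr 1
    apply Nat.eq_of_mul_eq_mul_left (NeZero.pos m)
    rw [hc, ← mul_assoc, Nat.mul_div_cancel' h]

lemma mem_range_prodMap_embedOfDvd [NeZero n] (h : m ∣ n) {y : ZMod n × ZMod n} :
    y ∈ ((embedOfDvd h).prodMap (embedOfDvd h)).range ↔ m • y = 0 := by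
  rw [AddMonoidHom.range_prodMap, AddSubgroup.mem_prod, mem_range_embedOfDvd, mem_range_embedOfDvd,
    Prod.ext_iff, Prod.smul_fst, Prod.smul_snd, Prod.fst_zero, Prod.snd_zero]

end ZMod

namespace AddSubgroup

variable {A B : Type*} [AddGroup A] [AddGroup B]

lemma exponent_map_of_injective {f : A →+ B} (hf : Injective f) (H : AddSubgroup A) :
    AddMonoid.exponent (H.map f) = AddMonoid.exponent H :=
  (AddMonoid.exponent_eq_of_addEquiv (H.equivMapOfInjective f hf)).symm

lemma le_of_exponent_eq {E : ℕ} {S : AddSubgroup B} (hS : ∀ b : B, E • b = 0 → b ∈ S)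
    {H : AddSubgroup B} (hH : AddMonoid.exponent H = E) : H ≤ S := fun b hb =>
  hS b (congrArg Subtype.val (hH ▸ AddMonoid.exponent_nsmul_eq_zero (⟨b, hb⟩ : H)))

def exponentEqEquivOfInjective {f : A →+ B} (hf : Injective f) {E : ℕ}
    (hrange : ∀ b : B, E • b = 0 → b ∈ f.range) :
    {H : AddSubgroup A // AddMonoid.exponent H = E} ≃
      {H : AddSubgroup B // AddMonoid.exponent H = E} where
  toFun H := ⟨H.1.map f, (exponent_map_of_injective hf H.1).trans H.2⟩
  invFun H := ⟨H.1.comap f, by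
    rw [← exponent_map_of_injective hf, map_comap_eq_self (le_of_exponent_eq hrange H.2), H.2]⟩
  left_inv H := Subtype.ext (comap_map_eq_self_of_injective hf H.1)
  right_inv H := Subtype.ext (map_comap_eq_self (le_of_exponent_eq hrange H.2))

end AddSubgroup

section Wedge

variable {R : Type*} [CommRing R]

def wedge (v w : R × R) : R := v.1 * w.2 - v.2 * w.1

lemma wedge_self (v : R × R) : wedge v v = 0 := by
  simp only [wedge]; ring

lemma wedge_swap (v w : R × R) : wedge w v = -wedge v w := by
  simp only [wedge]; ring

lemma wedge_nsmul_left (k : ℕ) (v w : R × R) : wedge (k • v) w = k • wedge v w := by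
  simp only [wedge, Prod.smul_fst, Prod.smul_snd]; simp only [nsmul_eq_mul]; ring

lemma wedge_nsmul_right (k : ℕ) (v w : R × R) : wedge v (k • w) = k • wedge v w := by
  simp only [wedge, Prod.smul_fst, Prod.smul_snd]; simp only [nsmul_eq_mul]; ring

lemma wedge_zsmul_left (k : ℤ) (v w : R × R) : wedge (k • v) w = k • wedge v w := by
  simp only [wedge, Prod.smul_fst, Prod.smul_snd]; simp only [zsmul_eq_mul]; ring

lemma linearMap_eq_wedge (f : R × R →ₗ[R] R) (u : R × R) :
    f u = wedge u (-f (0, 1), f (1, 0)) := by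
  have hu : u = u.1 • ((1 : R), (0 : R)) + u.2 • ((0 : R), (1 : R)) := by
    ext <;> simp
  rw [hu, map_add, map_smul, map_smul]
  simp only [wedge, smul_eq_mul]
  simp

def wedgeHom (v : R × R) : R × R →+ R :=
  AddMonoidHom.mk' (wedge v) fun a b => by simp only [wedge, Prod.fst_add, Prod.snd_add]; ring

@[simp] lemma wedgeHom_apply (v w : R × R) : wedgeHom v w = wedge v w := rfl

def wedgeOrth (H : AddSubgroup (R × R)) : AddSubgroup (R × R) :=
  ⨅ v ∈ H, (wedgeHom v).ker

lemma mem_wedgeOrth {H : AddSubgroup (R × R)} {w : R × R} :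
    w ∈ wedgeOrth H ↔ ∀ v ∈ H, wedge v w = 0 := by
  simp [wedgeOrth, AddSubgroup.mem_iInf]

lemma wedgeOrth_antitone : Antitone (wedgeOrth : AddSubgroup (R × R) → AddSubgroup (R × R)) :=
  fun _ _ hHK _ hw => mem_wedgeOrth.mpr fun v hv => mem_wedgeOrth.mp hw v (hHK hv)

lemma le_wedgeOrth_wedgeOrth (H : AddSubgroup (R × R)) : H ≤ wedgeOrth (wedgeOrth H) :=
  fun v hv => mem_wedgeOrth.mpr fun w hw => by
    rw [wedge_swap, mem_wedgeOrth.mp hw v hv, neg_zero]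

lemma wedgeOrth_zmultiples (g : R × R) :
    wedgeOrth (AddSubgroup.zmultiples g) = (wedgeHom g).ker := by
  ext w
  simp only [mem_wedgeOrth, AddSubgroup.forall_mem_zmultiples, AddMonoidHom.mem_ker,
    wedgeHom_apply, wedge_zsmul_left]
  exact ⟨fun h => by simpa using h 1, fun h k => by rw [h, smul_zero]⟩

lemma nsmul_mem_wedgeOrth {L : AddSubgroup (R × R)} {d : ℕ} (hL : ∀ w ∈ L, d • w = 0)
    (v : R × R) : d • v ∈ wedgeOrth L :=
  mem_wedgeOrth.mpr fun w hw => by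
    rw [wedge_nsmul_right, ← wedge_nsmul_left, hL w hw]
    simp [wedge]

end Wedge

section ZModSq

variable {E : ℕ} [NeZero E]

lemma exists_addMonoidHom_zmod_apply_ne_zero {Q : Type*} [AddCommGroup Q] [Finite Q]
    (hQ : ∀ q : Q, E • q = 0) {q : Q} (hq : q ≠ 0) : ∃ φ : Q →+ ZMod E, φ q ≠ 0 := by
  classical
  obtain ⟨ι, _, m, -, ⟨e⟩⟩ := AddCommGroup.equiv_directSum_zmod_of_finite' Q
  obtain ⟨i, hi⟩ : ∃ i, e q i ≠ 0 := by
    by_contra! h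
    exact hq (e.injective (DFinsupp.ext (by simpa using h)))
  have hm : m i ∣ E := by
    have := congrArg (fun x => e x i) (hQ (e.symm (DirectSum.of _ i 1)))
    simp only [map_nsmul, AddEquiv.apply_symm_apply, map_zero] at this
    rw [← map_nsmul, DirectSum.of_eq_same, nsmul_eq_mul, mul_one] at this
    exact (ZMod.natCast_eq_zero_iff _ _).mp this
  refine ⟨(ZMod.embedOfDvd hm).comp ((DFinsupp.evalAddMonoidHom i).comp e.toAddMonoidHom), ?_⟩
  exact (map_ne_zero_iff _ (ZMod.embedOfDvd_injective hm)).mpr hi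

lemma wedgeOrth_wedgeOrth (H : AddSubgroup (ZMod E × ZMod E)) :
    wedgeOrth (wedgeOrth H) = H := by
  refine le_antisymm (fun v hv => ?_) (le_wedgeOrth_wedgeOrth H)
  by_contra hvH
  have hQ (q : (ZMod E × ZMod E) ⧸ H) : E • q = 0 := by
    induction q using QuotientAddGroup.induction_on
    rw [← QuotientAddGroup.mk_nsmul, ZModModule.char_nsmul_eq_zero, QuotientAddGroup.mk_zero]
  obtain ⟨φ, hφ⟩ := exists_addMonoidHom_zmod_apply_ne_zero hQ
    ((QuotientAddGroup.eq_zero_iff v).not.mpr hvH)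
  set ψ := (φ.comp (QuotientAddGroup.mk' H)).toZModLinearMap E
  have hψ : (-ψ (0, 1), ψ (1, 0)) ∈ wedgeOrth H := mem_wedgeOrth.mpr fun u hu => by
    rw [← linearMap_eq_wedge]
    simp [ψ, (QuotientAddGroup.eq_zero_iff u).mpr hu]
  apply hφ
  have := linearMap_eq_wedge ψ v
  rwa [wedge_swap, mem_wedgeOrth.mp hv _ hψ, neg_zero] at this

lemma range_wedgeHom_eq_top {g : ZMod E × ZMod E} (hg : addOrderOf g = E) :
    (wedgeHom g).range = ⊤ := by
  set S := (wedgeHom g).range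
  have hg1 : g.1 ∈ S := ⟨(0, 1), by simp [wedge]⟩
  have hg2 : g.2 ∈ S := ⟨(-1, 0), by simp [wedge]⟩
  have hS : Nat.card S • g = 0 := by
    ext
    · exact congrArg Subtype.val (card_nsmul_eq_zero' (x := (⟨g.1, hg1⟩ : S)))
    · exact congrArg Subtype.val (card_nsmul_eq_zero' (x := (⟨g.2, hg2⟩ : S)))
  refine AddSubgroup.eq_top_of_card_eq S (Nat.dvd_antisymm ?_ ?_)
  · simpa using S.card_addSubgroup_dvd_card
  · simpa [hg] using addOrderOf_dvd_of_nsmul_eq_zero hS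

lemma ker_wedgeHom_eq_zmultiples {g : ZMod E × ZMod E} (hg : addOrderOf g = E) :
    (wedgeHom g).ker = AddSubgroup.zmultiples g := by
  have hle : AddSubgroup.zmultiples g ≤ (wedgeHom g).ker :=
    AddSubgroup.zmultiples_le.mpr (wedge_self g)
  have hcard := (wedgeHom g).ker.card_mul_index
  rw [AddSubgroup.index_ker, range_wedgeHom_eq_top hg] at hcard
  simp only [AddSubgroup.card_top, Nat.card_prod, Nat.card_zmod] at hcard
  refine (AddSubgroup.eq_of_le_of_card_ge hle ?_).symm
  rw [Nat.card_zmultiples, hg]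
  exact (Nat.eq_of_mul_eq_mul_right (NeZero.pos E) hcard).le

lemma isAddCyclic_wedgeOrth {H : AddSubgroup (ZMod E × ZMod E)}
    (hH : AddMonoid.exponent H = E) : IsAddCyclic (wedgeOrth H) := by
  obtain ⟨g, hg⟩ := AddMonoid.exists_addOrderOf_eq_exponent (G := H)
    AddMonoid.ExponentExists.of_finite
  rw [hH, ← AddSubgroup.addOrderOf_coe] at hg
  have hle : wedgeOrth H ≤ AddSubgroup.zmultiples (g : ZMod E × ZMod E) := by
    rw [← ker_wedgeHom_eq_zmultiples hg, ← wedgeOrth_zmultiples]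
    exact wedgeOrth_antitone (AddSubgroup.zmultiples_le.mpr g.2)
  exact AddSubgroup.isAddCyclic_of_le hle

lemma exponent_wedgeOrth {K : AddSubgroup (ZMod E × ZMod E)} (hK : IsAddCyclic K) :
    AddMonoid.exponent (wedgeOrth K) = E := by
  set d := AddMonoid.exponent (wedgeOrth K)
  have hd : d ∣ E :=
    AddMonoid.exponent_dvd_of_forall_nsmul_eq_zero (ZModModule.char_nsmul_eq_zero E)
  have hm : E / d ∣ E := Nat.div_dvd_of_dvd hd
  have hdm : E / (E / d) = d := Nat.div_div_self hd (NeZero.ne E)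
  have : NeZero (E / d) := .of_pos (Nat.pos_of_dvd_of_pos hm (NeZero.pos E))
  set f := (ZMod.embedOfDvd hm).prodMap (ZMod.embedOfDvd hm)
  have hf (x : ZMod (E / d) × ZMod (E / d)) : f x ∈ K := by
    have : f x = d • ((x.1.val : ZMod E), (x.2.val : ZMod E)) := by
      ext <;> simp [f, ZMod.embedOfDvd_apply, hdm]
    rw [this, ← wedgeOrth_wedgeOrth K]
    exact nsmul_mem_wedgeOrth (fun w hw => congrArg Subtype.val
      (AddMonoid.exponent_nsmul_eq_zero (⟨w, hw⟩ : wedgeOrth K))) _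
  have hinj : Injective (f.codRestrict K hf) := fun x y hxy =>
    ((ZMod.embedOfDvd_injective hm).prodMap (ZMod.embedOfDvd_injective hm))
      (congrArg Subtype.val hxy)
  have := isAddCyclic_of_injective _ hinj
  have hcop := coprime_card_of_isAddCyclic_prod (ZMod (E / d)) (ZMod (E / d))
  rw [Nat.card_zmod, Nat.coprime_self] at hcop
  rw [← hdm, hcop, Nat.div_one]

def exponentEqEquivIsAddCyclic (E : ℕ) [NeZero E] :
    {H : AddSubgroup (ZMod E × ZMod E) // AddMonoid.exponent H = E} ≃
      {K : AddSubgroup (ZMod E × ZMod E) // IsAddCyclic K} where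
  toFun H := ⟨wedgeOrth H.1, isAddCyclic_wedgeOrth H.2⟩
  invFun K := ⟨wedgeOrth K.1, exponent_wedgeOrth K.2⟩
  left_inv H := Subtype.ext (wedgeOrth_wedgeOrth H.1)
  right_inv K := Subtype.ext (wedgeOrth_wedgeOrth K.1)

end ZModSq

theorem stmt_14 (n E : ℕ) (hn : 1 ≤ n) (hE : E ∣ n) :
    Nat.card {H : AddSubgroup (ZMod n × ZMod n) // AddMonoid.exponent H = E} =
      Nat.card {H : AddSubgroup (ZMod E × ZMod E) // IsAddCyclic H} := by
  have : NeZero n := .of_pos hn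
  have : NeZero E := .of_pos (Nat.pos_of_dvd_of_pos hE hn)
  have hinj := (ZMod.embedOfDvd_injective hE).prodMap (ZMod.embedOfDvd_injective hE)
  have hrange (y : ZMod n × ZMod n) (hy : E • y = 0) :=
    (ZMod.mem_range_prodMap_embedOfDvd hE).mpr hy
  exact Nat.card_congr <|
    (AddSubgroup.exponentEqEquivOfInjective hinj hrange).symm.trans (exponentEqEquivIsAddCyclic E)
end

section
/- For every m, n ≥ 1, the sum of the exponents of all subgroups of Z_m × Z_n equals σ(m)·σ(n), where σ is the sum-of-divisors function. -/
/-!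
Every subgroup `H` of `ℤ/m × ℤ/n` is generated by the rows of a unique Hermite normal form
`[[a, c], [0, b]]` with `a ∣ m`, `b ∣ n`, `c < b` and `b ∣ (m / a) * c`: `⟨a⟩` is the first
projection of `H`, `⟨b⟩` its intersection with the second factor, and the last condition says
that `(m / a) • (a, c)` lies in that intersection. The exponent of `H` is
`lcm (m / a) (n / gcd b c)`.

For fixed `A = m / a`, write `e = gcd b c`, `b = e b'`, `c = e c'`. The admissible `(b, c)` with a
given `e ∣ n` correspond to the `(b', c')` with `b' ∣ gcd A (n / e)` and `c'` a unit modulo `b'`,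
of which there are `∑_{b' ∣ g} φ b' = g = gcd A (n / e)`. Hence the sum over `(b, c)` is
`∑_{e ∣ n} gcd A (n / e) * lcm A (n / e) = A σ(n)`, and summing `A = m / a` over `a ∣ m` gives
`σ(m) σ(n)`.
-/

open AddSubgroup Finset

namespace ZMod

variable {N a b : ℕ}

theorem intCast_mem_zmultiples_natCast_iff (hb : b ∣ N) {j : ℤ} :
    (j : ZMod N) ∈ zmultiples (b : ZMod N) ↔ (b : ℤ) ∣ j := by
  have hmap : zmultiples (b : ZMod N) = (zmultiples (b : ℤ)).map (Int.castAddHom (ZMod N)) := by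
    simp [AddMonoidHom.map_zmultiples]
  have hker : (Int.castAddHom (ZMod N)).ker ≤ zmultiples (b : ℤ) := by
    rw [ker_intCastAddHom, zmultiples_le, Int.mem_zmultiples_iff]
    exact_mod_cast hb
  change Int.castAddHom (ZMod N) j ∈ _ ↔ _
  rw [hmap, ← mem_comap, comap_map_eq, sup_eq_left.2 hker, Int.mem_zmultiples_iff]

theorem natCast_mem_zmultiples_natCast_iff (hb : b ∣ N) {j : ℕ} :
    (j : ZMod N) ∈ zmultiples (b : ZMod N) ↔ b ∣ j := by
  exact_mod_cast intCast_mem_zmultiples_natCast_iff hb (j := j)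

theorem zmultiples_natCast_inj (ha : a ∣ N) (hb : b ∣ N) :
    zmultiples (a : ZMod N) = zmultiples (b : ZMod N) ↔ a = b := by
  refine ⟨fun h => Nat.dvd_antisymm ?_ ?_, fun h => h ▸ rfl⟩
  · exact (natCast_mem_zmultiples_natCast_iff ha).1 (h ▸ mem_zmultiples _)
  · exact (natCast_mem_zmultiples_natCast_iff hb).1 (h ▸ mem_zmultiples _)

theorem exists_dvd_eq_zmultiples (S : AddSubgroup (ZMod N)) :
    ∃ b, b ∣ N ∧ S = zmultiples (b : ZMod N) := by
  obtain ⟨a, ha⟩ := Int.subgroup_cyclic (S.comap (Int.castAddHom (ZMod N)))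
  rw [← zmultiples_eq_closure, ← Int.zmultiples_natAbs] at ha
  refine ⟨a.natAbs, ?_, ?_⟩
  · have hN : (N : ℤ) ∈ S.comap (Int.castAddHom (ZMod N)) := by simp
    rw [ha, Int.mem_zmultiples_iff] at hN
    exact_mod_cast hN
  · rw [← map_comap_eq_self_of_surjective (f := Int.castAddHom (ZMod N)) intCast_surjective S, ha,
      AddMonoidHom.map_zmultiples]
    simp

theorem addOrderOf_natCast_of_dvd [NeZero N] (hb : b ∣ N) : addOrderOf (b : ZMod N) = N / b := by
  rw [addOrderOf_coe _ (NeZero.ne N), Nat.gcd_eq_right hb]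

end ZMod

namespace AddSubgroup

variable {G : Type*} [AddCommGroup G]

theorem exponent_closure_pair (u v : G) :
    AddMonoid.exponent (closure {u, v}) = Nat.lcm (addOrderOf u) (addOrderOf v) := by
  refine Nat.dvd_antisymm (AddMonoid.exponent_dvd_of_forall_nsmul_eq_zero ?_)
    (Nat.lcm_dvd ?_ ?_)
  · rintro ⟨x, hx⟩
    obtain ⟨k, l, rfl⟩ := mem_closure_pair.1 hx
    ext
    simp only [coe_nsmul, smul_add, smul_comm _ k, smul_comm _ l, ZeroMemClass.coe_zero,
      addOrderOf_dvd_iff_nsmul_eq_zero.1 (Nat.dvd_lcm_left _ _),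
      addOrderOf_dvd_iff_nsmul_eq_zero.1 (Nat.dvd_lcm_right _ _), smul_zero, add_zero]
  · rw [← addOrderOf_mk u (subset_closure (Set.mem_insert u _))]
    exact AddMonoid.addOrder_dvd_exponent _
  · rw [← addOrderOf_mk v (subset_closure (Set.mem_insert_of_mem u (Set.mem_singleton v)))]
    exact AddMonoid.addOrder_dvd_exponent _

variable {G₁ G₂ : Type*} [AddCommGroup G₁] [AddCommGroup G₂]

theorem eq_closure_pair_of_map_fst_of_comap_inr {H : AddSubgroup (G₁ × G₂)} {u : G₁} {v w : G₂}
    (hfst : H.map (AddMonoidHom.fst G₁ G₂) = zmultiples u)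
    (hinr : H.comap (AddMonoidHom.inr G₁ G₂) = zmultiples w) (huv : (u, v) ∈ H) :
    H = closure {(u, v), (0, w)} := by
  have hw : ((0 : G₁), w) ∈ H := by
    change w ∈ H.comap (AddMonoidHom.inr G₁ G₂)
    exact hinr ▸ mem_zmultiples w
  refine le_antisymm (fun x hx => ?_) ((closure_le H).2 (by simp [Set.insert_subset_iff, huv, hw]))
  obtain ⟨k, hk⟩ := mem_zmultiples_iff.1 (hfst ▸ mem_map_of_mem _ hx)
  have hrest : x.2 - k • v ∈ zmultiples w := by
    rw [← hinr, mem_comap]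
    convert sub_mem hx (zsmul_mem huv k) using 1
    ext
    · simp only [AddMonoidHom.coe_fst] at hk
      simp [← hk]
    · simp
  obtain ⟨l, hl⟩ := mem_zmultiples_iff.1 hrest
  refine mem_closure_pair.2 ⟨k, l, ?_⟩
  ext <;> simp [hk, hl]

end AddSubgroup

def hermiteSubgroup (m n a b c : ℕ) : AddSubgroup (ZMod m × ZMod n) :=
  closure {((a : ZMod m), (c : ZMod n)), (0, (b : ZMod n))}

theorem map_fst_hermiteSubgroup (m n a b c : ℕ) :
    (hermiteSubgroup m n a b c).map (AddMonoidHom.fst _ _) = zmultiples (a : ZMod m) := by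
  rw [hermiteSubgroup, AddMonoidHom.map_closure, Set.image_pair, AddMonoidHom.coe_fst,
    Set.pair_comm, ← Set.singleton_union, AddSubgroup.closure_union, closure_singleton_zero,
    bot_sup_eq, ← zmultiples_eq_closure]

section Hermite

variable {m n a b c : ℕ}

theorem comap_inr_hermiteSubgroup [NeZero m] (ha : a ∣ m) (hb : b ∣ n) (hbc : b ∣ m / a * c) :
    (hermiteSubgroup m n a b c).comap (AddMonoidHom.inr _ _) = zmultiples (b : ZMod n) := by
  refine le_antisymm (fun y hy => ?_) (zmultiples_le.2 (subset_closure (by simp)))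
  obtain ⟨k, l, hkl⟩ := mem_closure_pair.1 hy
  have hk : k • (a : ZMod m) = 0 := by simpa using congrArg Prod.fst hkl
  have hy : k • (c : ZMod n) + l • (b : ZMod n) = y := by simpa using congrArg Prod.snd hkl
  obtain ⟨t, rfl⟩ : ((m / a : ℕ) : ℤ) ∣ k := by
    rw [← ZMod.addOrderOf_natCast_of_dvd ha]
    exact addOrderOf_dvd_iff_zsmul_eq_zero.2 hk
  have hmul : ((m / a * c : ℕ) : ZMod n) ∈ zmultiples (b : ZMod n) :=
    (ZMod.natCast_mem_zmultiples_natCast_iff hb).2 hbc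
  rw [← hy, mul_comm, mul_zsmul, natCast_zsmul, nsmul_eq_mul, ← Nat.cast_mul]
  exact add_mem (zsmul_mem hmul t) (zsmul_mem (mem_zmultiples _) l)

theorem exponent_hermiteSubgroup [NeZero m] [NeZero n] (ha : a ∣ m) (hb : b ∣ n) :
    AddMonoid.exponent (hermiteSubgroup m n a b c) = Nat.lcm (m / a) (n / Nat.gcd b c) := by
  rw [hermiteSubgroup, exponent_closure_pair, Prod.addOrderOf_mk, Prod.addOrderOf_mk,
    ZMod.addOrderOf_natCast_of_dvd ha, ZMod.addOrderOf_natCast_of_dvd hb,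
    ZMod.addOrderOf_coe _ (NeZero.ne n), addOrderOf_zero, Nat.lcm_one_left, Nat.lcm_assoc,
    Nat.div_lcm_eq_div_gcd (Nat.gcd_dvd_left n c) hb, Nat.gcd_comm (n.gcd c), ← Nat.gcd_assoc,
    Nat.gcd_eq_left hb]

theorem exists_hermiteSubgroup_eq [NeZero n] (H : AddSubgroup (ZMod m × ZMod n)) :
    ∃ a b c, a ∣ m ∧ b ∣ n ∧ c < b ∧ b ∣ m / a * c ∧ hermiteSubgroup m n a b c = H := by
  obtain ⟨a, ha, hfst⟩ := ZMod.exists_dvd_eq_zmultiples (H.map (AddMonoidHom.fst _ _))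
  obtain ⟨b, hb, hinr⟩ := ZMod.exists_dvd_eq_zmultiples (H.comap (AddMonoidHom.inr _ _))
  have hbH : ((0 : ZMod m), (b : ZMod n)) ∈ H := by
    change (b : ZMod n) ∈ H.comap (AddMonoidHom.inr _ _)
    exact hinr ▸ mem_zmultiples _
  obtain ⟨c, hcb, hcH⟩ : ∃ c < b, ((a : ZMod m), (c : ZMod n)) ∈ H := by
    obtain ⟨⟨x, y⟩, hxy, hx⟩ := mem_map.1 (hfst ▸ mem_zmultiples (a : ZMod m))
    refine ⟨y.val % b, Nat.mod_lt _ (Nat.pos_of_dvd_of_pos hb (NeZero.pos n)), ?_⟩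
    -- `(a, y.val % b) = (a, y) - (y.val / b) • (0, b)`
    convert sub_mem hxy (nsmul_mem hbH (y.val / b)) using 1
    ext
    · simpa using hx.symm
    · rw [Prod.snd_sub, Prod.smul_snd, nsmul_eq_mul, eq_sub_iff_add_eq]
      dsimp only
      rw [← Nat.cast_mul, ← Nat.cast_add, Nat.mod_add_div', ZMod.natCast_zmod_val]
  refine ⟨a, b, c, ha, hb, hcb, ?_,
    (AddSubgroup.eq_closure_pair_of_map_fst_of_comap_inr hfst hinr hcH).symm⟩
  rw [← ZMod.natCast_mem_zmultiples_natCast_iff hb, ← hinr, mem_comap]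
  convert nsmul_mem hcH (m / a) using 1
  ext
  · simp [← Nat.cast_mul, Nat.div_mul_cancel ha]
  · simp

theorem eq_of_hermiteSubgroup_eq [NeZero m] {a' b' c' : ℕ} (ha : a ∣ m) (hb : b ∣ n) (hcb : c < b)
    (hbc : b ∣ m / a * c) (ha' : a' ∣ m) (hb' : b' ∣ n) (hcb' : c' < b')
    (hbc' : b' ∣ m / a' * c') (h : hermiteSubgroup m n a b c = hermiteSubgroup m n a' b' c') :
    a = a' ∧ b = b' ∧ c = c' := by
  obtain rfl : a = a' := (ZMod.zmultiples_natCast_inj ha ha').1 <| by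
    rw [← map_fst_hermiteSubgroup m n a b c, h, map_fst_hermiteSubgroup]
  obtain rfl : b = b' := (ZMod.zmultiples_natCast_inj hb hb').1 <| by
    rw [← comap_inr_hermiteSubgroup ha hb hbc, h, comap_inr_hermiteSubgroup ha hb' hbc']
  refine ⟨rfl, rfl, (Nat.ModEq.eq_of_lt_of_lt (Nat.modEq_iff_dvd.2 ?_) hcb' hcb).symm⟩
  have hc : ((a : ZMod m), (c : ZMod n)) ∈ hermiteSubgroup m n a b c :=
    subset_closure (Set.mem_insert _ _)
  have hc' : ((a : ZMod m), (c' : ZMod n)) ∈ hermiteSubgroup m n a b c :=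
    h ▸ subset_closure (Set.mem_insert _ _)
  rw [← ZMod.intCast_mem_zmultiples_natCast_iff hb, ← comap_inr_hermiteSubgroup ha hb hbc,
    mem_comap]
  convert sub_mem hc hc' using 1
  ext <;> simp

end Hermite

def hermitePairs (A n : ℕ) : Finset (Σ _ : ℕ, ℕ) :=
  n.divisors.sigma fun b => (range b).filter (b ∣ A * ·)

theorem mem_hermitePairs {A n b c : ℕ} :
    ⟨b, c⟩ ∈ hermitePairs A n ↔ b ∣ n ∧ n ≠ 0 ∧ c < b ∧ b ∣ A * c := by
  simp [hermitePairs, and_assoc]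

def hermiteTriples (m n : ℕ) : Finset (Σ _ : ℕ, Σ _ : ℕ, ℕ) :=
  m.divisors.sigma fun a => hermitePairs (m / a) n

theorem mem_hermiteTriples {m n a b c : ℕ} [NeZero m] [NeZero n] :
    ⟨a, b, c⟩ ∈ hermiteTriples m n ↔ a ∣ m ∧ b ∣ n ∧ c < b ∧ b ∣ m / a * c := by
  simp [hermiteTriples, hermitePairs, NeZero.ne]

theorem finsum_addSubgroup_eq_sum_hermiteTriples {M : Type*} [AddCommMonoid M] {m n : ℕ}
    [NeZero m] [NeZero n] (f : AddSubgroup (ZMod m × ZMod n) → M) :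
    ∑ᶠ H, f H = ∑ t ∈ hermiteTriples m n, f (hermiteSubgroup m n t.1 t.2.1 t.2.2) := by
  rw [← finsum_mem_univ, ← finsum_mem_coe_finset]
  have hbij : Set.BijOn (fun t : Σ _ : ℕ, Σ _ : ℕ, ℕ => hermiteSubgroup m n t.1 t.2.1 t.2.2)
      (hermiteTriples m n : Set _) Set.univ := by
    refine ⟨Set.mapsTo_univ _ _, ?_, fun H _ => ?_⟩
    · rintro ⟨a, b, c⟩ ht ⟨a', b', c'⟩ ht' h
      obtain ⟨ha, hb, hcb, hbc⟩ := mem_hermiteTriples.1 ht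
      obtain ⟨ha', hb', hcb', hbc'⟩ := mem_hermiteTriples.1 ht'
      obtain ⟨rfl, rfl, rfl⟩ := eq_of_hermiteSubgroup_eq ha hb hcb hbc ha' hb' hcb' hbc' h
      rfl
    · obtain ⟨a, b, c, ha, hb, hcb, hbc, rfl⟩ := exists_hermiteSubgroup_eq H
      exact ⟨⟨a, b, c⟩, mem_hermiteTriples.2 ⟨ha, hb, hcb, hbc⟩, rfl⟩
  exact (finsum_mem_eq_of_bijOn _ hbij fun _ _ => rfl).symm

def coprimePairs (g : ℕ) : Finset (Σ _ : ℕ, ℕ) :=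
  g.divisors.sigma fun b => (range b).filter b.Coprime

theorem mem_coprimePairs {g b c : ℕ} :
    ⟨b, c⟩ ∈ coprimePairs g ↔ b ∣ g ∧ g ≠ 0 ∧ c < b ∧ b.Coprime c := by
  simp [coprimePairs, and_assoc]

theorem card_coprimePairs (g : ℕ) : #(coprimePairs g) = g := by
  rw [coprimePairs, card_sigma]
  exact Nat.sum_totient g

def scaledCoprimePairs (A n : ℕ) : Finset (Σ _ : ℕ, Σ _ : ℕ, ℕ) :=
  n.divisors.sigma fun e => coprimePairs (Nat.gcd A (n / e))

theorem mem_scaledCoprimePairs {A n e b c : ℕ} :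
    ⟨e, b, c⟩ ∈ scaledCoprimePairs A n ↔
      (e ∣ n ∧ n ≠ 0) ∧ b ∣ Nat.gcd A (n / e) ∧ Nat.gcd A (n / e) ≠ 0 ∧ c < b ∧ b.Coprime c := by
  rw [scaledCoprimePairs, mem_sigma, Nat.mem_divisors, mem_coprimePairs]

theorem sum_scaledCoprimePairs {M : Type*} [AddCommMonoid M] (A n : ℕ) (f : ℕ → M) :
    ∑ q ∈ scaledCoprimePairs A n, f q.1 = ∑ e ∈ n.divisors, Nat.gcd A (n / e) • f e := by
  simp only [scaledCoprimePairs, sum_sigma, sum_const, card_coprimePairs]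

theorem div_gcd_mem_scaledCoprimePairs {A n b c : ℕ} (hp : ⟨b, c⟩ ∈ hermitePairs A n) :
    ⟨Nat.gcd b c, b / Nat.gcd b c, c / Nat.gcd b c⟩ ∈ scaledCoprimePairs A n := by
  obtain ⟨hbn, hn, hcb, hbc⟩ := mem_hermitePairs.1 hp
  have hb : 0 < b := Nat.pos_of_dvd_of_pos hbn (Nat.pos_of_ne_zero hn)
  have hgb := Nat.gcd_dvd_left b c
  have hcop := Nat.coprime_div_gcd_div_gcd (Nat.gcd_pos_of_pos_left c hb)
  refine mem_scaledCoprimePairs.2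
    ⟨⟨hgb.trans hbn, hn⟩, ?_, ?_, Nat.div_lt_div_of_lt_of_dvd hgb hcb, hcop⟩
  · refine Nat.dvd_gcd (hcop.dvd_of_dvd_mul_right ?_) (Nat.div_dvd_div hgb hbn)
    exact Nat.mul_div_assoc A (Nat.gcd_dvd_right b c) ▸ Nat.div_dvd_div hgb hbc
  · exact (Nat.gcd_pos_of_pos_right _ (Nat.div_pos (Nat.le_of_dvd hn.bot_lt (hgb.trans hbn))
      (Nat.gcd_pos_of_pos_left c hb))).ne'

theorem mul_mem_hermitePairs {A n e b c : ℕ} (hq : ⟨e, b, c⟩ ∈ scaledCoprimePairs A n) :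
    ⟨e * b, e * c⟩ ∈ hermitePairs A n := by
  obtain ⟨⟨hen, hn⟩, hbg, -, hcb, -⟩ := mem_scaledCoprimePairs.1 hq
  have he : 0 < e := Nat.pos_of_dvd_of_pos hen (Nat.pos_of_ne_zero hn)
  refine mem_hermitePairs.2 ⟨?_, hn, Nat.mul_lt_mul_of_pos_left hcb he, ?_⟩
  · exact Nat.mul_dvd_of_dvd_div hen (hbg.trans (Nat.gcd_dvd_right _ _))
  · rw [Nat.mul_left_comm]
    exact mul_dvd_mul_left e ((hbg.trans (Nat.gcd_dvd_left _ _)).mul_right c)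

theorem sum_hermitePairs_eq_sum_divisors {M : Type*} [AddCommMonoid M] (A n : ℕ) (f : ℕ → M) :
    ∑ p ∈ hermitePairs A n, f (Nat.gcd p.1 p.2) = ∑ e ∈ n.divisors, Nat.gcd A (n / e) • f e := by
  rw [← sum_scaledCoprimePairs]
  refine sum_nbij' (fun p => ⟨Nat.gcd p.1 p.2, p.1 / Nat.gcd p.1 p.2, p.2 / Nat.gcd p.1 p.2⟩)
    (fun q => ⟨q.1 * q.2.1, q.1 * q.2.2⟩) (fun _ => div_gcd_mem_scaledCoprimePairs)
    (fun _ => mul_mem_hermitePairs) ?_ ?_ fun _ _ => rfl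
  · rintro ⟨b, c⟩ -
    simp [Nat.mul_div_cancel' (Nat.gcd_dvd_left b c), Nat.mul_div_cancel' (Nat.gcd_dvd_right b c)]
  · rintro ⟨e, b, c⟩ hq
    obtain ⟨⟨hen, hn⟩, -, -, -, hcop⟩ := mem_scaledCoprimePairs.1 hq
    have he : 0 < e := Nat.pos_of_dvd_of_pos hen (Nat.pos_of_ne_zero hn)
    simp [Nat.gcd_mul_left, hcop.gcd_eq_one, he]

theorem sum_hermitePairs_lcm (A n : ℕ) :
    ∑ p ∈ hermitePairs A n, Nat.lcm A (n / Nat.gcd p.1 p.2) = A * ∑ d ∈ n.divisors, d := by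
  rw [sum_hermitePairs_eq_sum_divisors A n fun e => Nat.lcm A (n / e)]
  simp only [smul_eq_mul, Nat.gcd_mul_lcm, ← mul_sum, Nat.sum_div_divisors n fun d => d]

theorem stmt_15 (m n : ℕ) (hm : 1 ≤ m) (hn : 1 ≤ n) :
    ∑ᶠ H : AddSubgroup (ZMod m × ZMod n), AddMonoid.exponent H =
      (∑ d ∈ m.divisors, d) * (∑ d ∈ n.divisors, d) := by
  have : NeZero m := ⟨by omega⟩
  have : NeZero n := ⟨by omega⟩
  calc ∑ᶠ H : AddSubgroup (ZMod m × ZMod n), AddMonoid.exponent H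
      = ∑ t ∈ hermiteTriples m n, Nat.lcm (m / t.1) (n / Nat.gcd t.2.1 t.2.2) := by
        rw [finsum_addSubgroup_eq_sum_hermiteTriples]
        refine sum_congr rfl fun ⟨a, b, c⟩ ht => ?_
        obtain ⟨ha, hb, -⟩ := mem_hermiteTriples.1 ht
        exact exponent_hermiteSubgroup ha hb
    _ = ∑ a ∈ m.divisors, m / a * ∑ d ∈ n.divisors, d := by
        rw [hermiteTriples, sum_sigma]
        exact sum_congr rfl fun a _ => sum_hermitePairs_lcm (m / a) n
    _ = (∑ d ∈ m.divisors, d) * (∑ d ∈ n.divisors, d) := by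
        rw [← sum_mul, Nat.sum_div_divisors m (fun d => d)]
end
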